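/- Let C be a left H-category and let M, N be objects of mod-(C#H) with M finitely generated in Mod-(C#H). Then the left H-module Hom_{Mod-C}(M,N) is H-locally finite; that is, L_{Mod-C}(M,N) = Hom_{Mod-C}(M,N)^{(H)} = Hom_{Mod-C}(M,N). -/

import Mathlib

open CategoryTheory TensorProduct
noncomputable section

structure LinCat (K : Type) [Field K] where
  Obj : Type
  Hom : Obj → Obj → Type
  [addHom : ∀ X Y, AddCommGroup (Hom X Y)]
  [modHom : ∀ X Y, Module K (Hom X Y)]
  idm : ∀ X, Hom X X
  comp : ∀ {X Y Z : Obj}, Hom X Y →ₗ[K] Hom Y Z →ₗ[K] Hom X Z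
  id_comp : ∀ {X Y : Obj} (f : Hom X Y), comp (idm X) f = f
  comp_id : ∀ {X Y : Obj} (f : Hom X Y), comp f (idm Y) = f
  assoc : ∀ {W X Y Z : Obj} (f : Hom W X) (g : Hom X Y) (h : Hom Y Z),
    comp (comp f g) h = comp f (comp g h)

attribute [instance] LinCat.addHom LinCat.modHom

variable (K : Type) [Field K] (H : Type) [Ring H] [HopfAlgebra K H]

structure RMod (D : LinCat K) where
  ob : D.Obj → Type
  [addOb : ∀ X, AddCommGroup (ob X)]
  [modOb : ∀ X, Module K (ob X)]
  map : ∀ {X Y : D.Obj}, D.Hom X Y →ₗ[K] (ob Y →ₗ[K] ob X)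
  map_id : ∀ X, map (D.idm X) = LinearMap.id
  map_comp : ∀ {X Y Z : D.Obj} (f : D.Hom X Y) (g : D.Hom Y Z),
    map (D.comp f g) = (map f) ∘ₗ (map g)

attribute [instance] RMod.addOb RMod.modOb

@[ext] structure RModHom {D : LinCat K} (M N : RMod K D) where
  app : ∀ X, M.ob X →ₗ[K] N.ob X
  natural : ∀ {X Y : D.Obj} (f : D.Hom X Y) (m : M.ob Y),
    app X (M.map f m) = N.map f (app Y m)

instance RMod.instCategory (D : LinCat K) : Category (RMod K D) where
  Hom M N := RModHom K M N
  id M := ⟨fun _ => LinearMap.id, by intros; rfl⟩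
  comp η θ := ⟨fun X => (θ.app X).comp (η.app X), by
    intro X Y f m
    simp only [LinearMap.comp_apply, η.natural, θ.natural]⟩
  id_comp := by intros; rfl
  comp_id := by intros; rfl
  assoc := by intros; rfl

namespace RModHom

variable {K H} {D : LinCat K} {M N : RMod K D}

instance : Zero (RModHom K M N) :=
  ⟨⟨fun _ => 0, by intros; simp⟩⟩

instance : Add (RModHom K M N) :=
  ⟨fun η ν => ⟨fun X => η.app X + ν.app X, by
    intro X Y f m
    simp [η.natural, ν.natural]⟩⟩

instance : Neg (RModHom K M N) :=
  ⟨fun η => ⟨fun X => -η.app X, by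
    intro X Y f m
    simp [η.natural]⟩⟩

instance : Sub (RModHom K M N) :=
  ⟨fun η ν => ⟨fun X => η.app X - ν.app X, by
    intro X Y f m
    simp [η.natural, ν.natural]⟩⟩

instance : SMul K (RModHom K M N) :=
  ⟨fun k η => ⟨fun X => k • η.app X, by
    intro X Y f m
    simp [η.natural]⟩⟩

instance : SMul ℕ (RModHom K M N) :=
  ⟨fun n η => ⟨fun X => n • η.app X, by
    intro X Y f m
    simp [η.natural]⟩⟩

instance : SMul ℤ (RModHom K M N) :=
  ⟨fun n η => ⟨fun X => n • η.app X, by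
    intro X Y f m
    simp [η.natural]⟩⟩

theorem app_injective :
    Function.Injective (fun (η : RModHom K M N) => η.app) := by
  intro η ν h; ext X m; exact congrFun (congrArg (fun u => (u X : M.ob X → N.ob X)) h) m

instance : AddCommGroup (RModHom K M N) :=
  Function.Injective.addCommGroup (fun η => η.app) app_injective
    rfl (fun _ _ => rfl) (fun _ => rfl) (fun _ _ => rfl) (fun _ _ => rfl) (fun _ _ => rfl)

instance : Module K (RModHom K M N) :=
  Function.Injective.module K
    ⟨⟨fun η => η.app, rfl⟩, fun _ _ => rfl⟩ app_injective (fun _ _ => rfl)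

@[simp] theorem add_app (η ν : RModHom K M N) (X : D.Obj) :
    (η + ν).app X = η.app X + ν.app X := rfl

@[simp] theorem smul_app (k : K) (η : RModHom K M N) (X : D.Obj) :
    (k • η).app X = k • η.app X := rfl

@[simp] theorem zero_app (X : D.Obj) : (0 : RModHom K M N).app X = 0 := rfl

end RModHom


section PART3
variable (K : Type) [Field K] (H : Type) [Ring H] [HopfAlgebra K H]

structure LeftHCat extends LinCat K where
  act : ∀ X Y, H →ₗ[K] Hom X Y →ₗ[K] Hom X Y
  act_one : ∀ X Y, act X Y 1 = LinearMap.id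
  act_mul : ∀ X Y (a b : H), act X Y (a * b) = (act X Y a) ∘ₗ (act X Y b)
  act_idm : ∀ (X : Obj) (h : H),
    act X X h (idm X) = Coalgebra.counit (R := K) h • idm X
  act_comp : ∀ {X Y Z : Obj} (h : H) (u : Hom X Y) (v : Hom Y Z),
    act X Z h (comp u v) =
      TensorProduct.lift (comp (X := X) (Y := Y) (Z := Z)).flip
        (TensorProduct.map ((act Y Z).flip v) ((act X Y).flip u)
          (Coalgebra.comul (R := K) h))

variable {K H}

/-- The smash product category `C # H`: it has the same objects as `C` and
`Hom (X, Y) = Hom_C(X, Y) ⊗ H`, with composition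
`(g # h') ≫ (f # h) = ∑ ((h₁ g) ≫ f) # (h₂ * h')` (i.e. `(f#h)∘(g#h') = ∑ f∘(h₁g) # h₂h'`).
Since the composition is uniquely determined by this formula, we record the smash
product category as a structure whose fields assert that these formulas indeed
define a `K`-linear category. -/
structure SmashCat (C : LeftHCat K H) where
  comp : ∀ {X Y Z : C.Obj},
    (C.Hom X Y ⊗[K] H) →ₗ[K] (C.Hom Y Z ⊗[K] H) →ₗ[K] (C.Hom X Z ⊗[K] H)
  comp_tmul : ∀ {X Y Z : C.Obj} (u : C.Hom X Y) (h' : H) (v : C.Hom Y Z) (h : H),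
    comp (u ⊗ₜ[K] h') (v ⊗ₜ[K] h) =
      TensorProduct.map
        (((C.comp (X := X) (Y := Y) (Z := Z)).flip v) ∘ₗ ((C.act X Y).flip u))
        (LinearMap.mulRight K h')
        (Coalgebra.comul (R := K) h)
  id_comp : ∀ {X Y : C.Obj} (f : C.Hom X Y ⊗[K] H),
    comp ((C.idm X) ⊗ₜ[K] (1 : H)) f = f
  comp_id : ∀ {X Y : C.Obj} (f : C.Hom X Y ⊗[K] H),
    comp f ((C.idm Y) ⊗ₜ[K] (1 : H)) = f
  assoc : ∀ {W X Y Z : C.Obj} (f : C.Hom W X ⊗[K] H) (g : C.Hom X Y ⊗[K] H)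
    (h : C.Hom Y Z ⊗[K] H), comp (comp f g) h = comp f (comp g h)

/-- The underlying `K`-linear category of the smash product category `C # H`. -/
def SmashCat.lin {C : LeftHCat K H} (S : SmashCat C) : LinCat K where
  Obj := C.Obj
  Hom X Y := C.Hom X Y ⊗[K] H
  idm X := (C.idm X) ⊗ₜ[K] (1 : H)
  comp := S.comp
  id_comp := S.id_comp
  comp_id := S.comp_id
  assoc := S.assoc

attribute [reducible] SmashCat.lin

section Restrict

variable {C : LeftHCat K H} (S : SmashCat C)

theorem SmashCat.comp_tmul_one {X Y Z : C.Obj} (f : C.Hom X Y) (g : C.Hom Y Z) :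
    S.comp (f ⊗ₜ[K] (1 : H)) (g ⊗ₜ[K] (1 : H)) = (C.comp f g) ⊗ₜ[K] (1 : H) := by
  rw [S.comp_tmul]
  rw [show Coalgebra.comul (R := K) (1 : H) = (1 : H ⊗[K] H) from Bialgebra.comul_one]
  rw [Algebra.TensorProduct.one_def, TensorProduct.map_tmul]
  simp [C.act_one]

/-- Restriction of scalars from `Mod-(C#H)` to `Mod-C`, on objects. -/
def restrictOb (M : RMod K S.lin) : RMod K C.toLinCat where
  ob := M.ob
  map {X Y} := M.map ∘ₗ ((TensorProduct.mk K (C.Hom X Y) H).flip (1 : H))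
  map_id X := M.map_id X
  map_comp {X Y Z} f g := by
    show M.map ((C.comp f g) ⊗ₜ[K] (1 : H)) =
      (M.map (f ⊗ₜ[K] (1 : H))) ∘ₗ (M.map (g ⊗ₜ[K] (1 : H)))
    rw [← S.comp_tmul_one]
    exact M.map_comp _ _

/-- Restriction of scalars on morphisms. -/
def restrictHom {M N : RMod K S.lin} (η : M ⟶ N) :
    restrictOb S M ⟶ restrictOb S N where
  app := η.app
  natural {X Y} f m := η.natural (f ⊗ₜ[K] (1 : H)) m

/-- The restriction of scalars functor `Mod-(C#H) ⥤ Mod-C`. -/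
def restrictFunctor : RMod K S.lin ⥤ RMod K C.toLinCat where
  obj := restrictOb S
  map := restrictHom S
  map_id := by intros; rfl
  map_comp := by intros; rfl

/-- The canonical left `H`-action on the values `M(X)` of a right `C#H`-module:
`h • m := M (id_X # (S h)) m`. -/
def actOn (M : RMod K S.lin) (X : C.Obj) : H →ₗ[K] M.ob X →ₗ[K] M.ob X :=
  M.map ∘ₗ (TensorProduct.mk K (C.Hom X X) H (C.idm X)) ∘ₗ
    (HopfAlgebra.antipode (R := K) (A := H))

/-- The Sweedler-style right-hand side `∑ h₁ • (η X ((S h₂) • m))` of the adjoint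
`H`-action on `C`-module morphisms between (restrictions of) `C#H`-modules. -/
def adjRHS {M N : RMod K S.lin} (η : restrictOb S M ⟶ restrictOb S N)
    (h : H) (X : C.Obj) (m : M.ob X) : N.ob X :=
  TensorProduct.lift
    (((LinearMap.llcomp (σ₁₂ := RingHom.id K) (σ₂₃ := RingHom.id K) (σ₁₃ := RingHom.id K)
        K H (N.ob X) (N.ob X)).flip
        ((η.app X) ∘ₗ (((actOn S M X) ∘ₗ (HopfAlgebra.antipode (R := K) (A := H))).flip m)))
      ∘ₗ (actOn S N X))
    (Coalgebra.comul (R := K) h)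

end Restrict
end PART3

section PART4
variable {K : Type} [Field K] {H : Type} [Ring H] [HopfAlgebra K H]

/-- The property that an (unbundled) family of maps is a right module structure over a
`K`-linear category. -/
def IsRModMap (K : Type) [Field K] (D : LinCat K) (ob : D.Obj → Type)
    [∀ X, AddCommGroup (ob X)] [∀ X, Module K (ob X)]
    (map : ∀ X Y : D.Obj, D.Hom X Y →ₗ[K] (ob Y →ₗ[K] ob X)) : Prop :=
  (∀ X, map X X (D.idm X) = LinearMap.id) ∧
  (∀ (X Y Z : D.Obj) (f : D.Hom X Y) (g : D.Hom Y Z),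
    map X Z (D.comp f g) = (map X Y f) ∘ₗ (map Y Z g))

/-- Bundle unbundled right module data into a module. -/
def RMod.mk' (K : Type) [Field K] (D : LinCat K) (ob : D.Obj → Type)
    [∀ X, AddCommGroup (ob X)] [∀ X, Module K (ob X)]
    (map : ∀ X Y : D.Obj, D.Hom X Y →ₗ[K] (ob Y →ₗ[K] ob X))
    (hmap : IsRModMap K D ob map) : RMod K D where
  ob := ob
  map := map _ _
  map_id := hmap.1
  map_comp := hmap.2 _ _ _

/-- A left `H`-equivariant right `C`-module over a left `H`-category `C`:
a right `C`-module together with left `H`-module structures on its values such that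
`h • (M f m) = ∑ M (h₂ • f) (h₁ • m)`. -/
structure EqMod (C : LeftHCat K H) extends RMod K C.toLinCat where
  eact : ∀ X, H →ₗ[K] ob X →ₗ[K] ob X
  eact_one : ∀ X, eact X 1 = LinearMap.id
  eact_mul : ∀ X (a b : H), eact X (a * b) = (eact X a) ∘ₗ (eact X b)
  equivar : ∀ {X Y : C.Obj} (h : H) (f : C.Hom X Y) (m : ob Y),
    eact X h (map f m) =
      TensorProduct.lift
        (((map (X := X) (Y := Y)).comp ((C.act X Y).flip f)).flip ∘ₗ ((eact Y).flip m))
        (Coalgebra.comul (R := K) h)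

/-- Morphisms of `H`-equivariant right `C`-modules: `C`-module morphisms whose
components are `H`-linear. -/
@[ext] structure EqModHom {C : LeftHCat K H} (M N : EqMod C) where
  hom : M.toRMod ⟶ N.toRMod
  hlin : ∀ (X : C.Obj) (h : H) (m : M.ob X),
    hom.app X (M.eact X h m) = N.eact X h (hom.app X m)

instance EqMod.instCategory (C : LeftHCat K H) : Category (EqMod C) where
  Hom M N := EqModHom M N
  id M := ⟨𝟙 M.toRMod, by intros; rfl⟩
  comp {M N P} η θ := ⟨η.hom ≫ θ.hom, by
    intro X h m
    show θ.hom.app X (η.hom.app X (M.eact X h m)) = _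
    rw [η.hlin, θ.hlin]
    rfl⟩
  id_comp := by intros; rfl
  comp_id := by intros; rfl
  assoc := by intros; rfl

/-- A left `H`-module, unbundled (an object of `H`-Mod). -/
structure HLMod (K : Type) [Field K] (H : Type) [Ring H] [HopfAlgebra K H] where
  V : Type
  [addV : AddCommGroup V]
  [modV : Module K V]
  act : H →ₗ[K] V →ₗ[K] V
  act_one : act 1 = LinearMap.id
  act_mul : ∀ a b : H, act (a * b) = (act a) ∘ₗ (act b)

attribute [instance] HLMod.addV HLMod.modV

/-- Morphisms of left `H`-modules. -/
@[ext] structure HLModHom (M N : HLMod K H) where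
  f : M.V →ₗ[K] N.V
  hf : ∀ (h : H) (m : M.V), f (M.act h m) = N.act h (f m)

instance HLMod.instCategory : Category (HLMod K H) where
  Hom M N := HLModHom M N
  id M := ⟨LinearMap.id, by intros; rfl⟩
  comp {M N P} g₁ g₂ := ⟨g₂.f ∘ₗ g₁.f, by
    intro h m
    show g₂.f (g₁.f (M.act h m)) = _
    rw [g₁.hf, g₂.hf]
    rfl⟩
  id_comp := by intros; rfl
  comp_id := by intros; rfl
  assoc := by intros; rfl

/-- The `H`-invariants `M^H = {m | h • m = ε(h) m}` of a left `H`-module. -/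
def HLMod.invariants (M : HLMod K H) : Submodule K M.V where
  carrier := {v | ∀ h : H, M.act h v = Coalgebra.counit (R := K) h • v}
  add_mem' := by
    intro a b ha hb h
    rw [map_add, ha h, hb h, smul_add]
  zero_mem' := by
    intro h
    rw [map_zero, smul_zero]
  smul_mem' := by
    intro k v hv h
    rw [map_smul, hv h, smul_comm]

/-- The `H`-invariants functor `H-Mod ⥤ Vect_K`. -/
def invariantsFunctor : HLMod K H ⥤ ModuleCat K where
  obj M := ModuleCat.of K M.invariants
  map {M N} g := ModuleCat.ofHom (g.f.restrict (p := M.invariants) (q := N.invariants)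
    (by
      intro v hv h
      rw [← g.hf, hv h]
      exact map_smul g.f _ _))
  map_id := by intros; rfl
  map_comp := by intros; rfl

/-- An element of a left `H`-module is locally finite if it generates a finite
dimensional submodule. -/
def HLMod.LocFinElt (M : HLMod K H) (v : M.V) : Prop :=
  FiniteDimensional K (Submodule.span K (Set.range (fun h : H => M.act h v)))

/-- The locally finite part `M^{(H)}` of a left `H`-module. -/
def HLMod.locFin (M : HLMod K H) : Submodule K M.V where
  carrier := {v | M.LocFinElt v}
  add_mem' := by
    intro a b ha hb
    haveI h1 : FiniteDimensional K
        (Submodule.span K (Set.range (fun h : H => M.act h a))) := ha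
    haveI h2 : FiniteDimensional K
        (Submodule.span K (Set.range (fun h : H => M.act h b))) := hb
    have hsub : Set.range (fun h : H => M.act h (a + b)) ⊆
        ↑(Submodule.span K (Set.range (fun h : H => M.act h a)) ⊔
          Submodule.span K (Set.range (fun h : H => M.act h b))) := by
      rintro x ⟨h, rfl⟩
      show M.act h (a + b) ∈ _
      have hadd : M.act h (a + b) = M.act h a + M.act h b := by simp
      rw [hadd]
      exact Submodule.add_mem _
        (Submodule.mem_sup_left (Submodule.subset_span ⟨h, rfl⟩))
        (Submodule.mem_sup_right (Submodule.subset_span ⟨h, rfl⟩))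
    have hle := Submodule.span_le.2 hsub
    haveI h3 : FiniteDimensional K
        ↥(Submodule.span K (Set.range (fun h : H => M.act h a)) ⊔
          Submodule.span K (Set.range (fun h : H => M.act h b))) :=
      Submodule.finiteDimensional_sup _ _
    exact Submodule.finiteDimensional_of_le hle
  zero_mem' := by
    have hsub : Set.range (fun h : H => M.act h (0 : M.V)) ⊆
        ↑(⊥ : Submodule K M.V) := by rintro x ⟨h, rfl⟩; simp
    have hle := Submodule.span_le.2 hsub
    exact Submodule.finiteDimensional_of_le (S₂ := ⊥) hle
  smul_mem' := by
    intro k v hv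
    haveI h1 : FiniteDimensional K
        (Submodule.span K (Set.range (fun h : H => M.act h v))) := hv
    have hsub : Set.range (fun h : H => M.act h (k • v)) ⊆
        ↑(Submodule.span K (Set.range (fun h : H => M.act h v))) := by
      rintro x ⟨h, rfl⟩
      show M.act h (k • v) ∈ _
      have hs : M.act h (k • v) = k • M.act h v := by simp
      rw [hs]
      exact Submodule.smul_mem _ _ (Submodule.subset_span ⟨h, rfl⟩)
    exact Submodule.finiteDimensional_of_le (Submodule.span_le.2 hsub)

/-- A left `H`-module is locally finite iff every element is. -/
def HLMod.IsLocFin (M : HLMod K H) : Prop := ∀ v : M.V, M.LocFinElt v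

end PART4

section PART5
open CategoryTheory.Limits
variable {K : Type} [Field K] {H : Type} [Ring H] [HopfAlgebra K H]

instance {D : LinCat K} (M N : RMod K D) : AddCommGroup (M ⟶ N) :=
  inferInstanceAs (AddCommGroup (RModHom K M N))

instance {D : LinCat K} (M N : RMod K D) : Module K (M ⟶ N) :=
  inferInstanceAs (Module K (RModHom K M N))

/-- Post-composition with a module morphism, as a linear map on `Hom`-spaces. -/
def postcompLin {D : LinCat K} (M : RMod K D) {N P : RMod K D} (θ : N ⟶ P) :
    (M ⟶ N) →ₗ[K] (M ⟶ P) where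
  toFun η := η ≫ θ
  map_add' η ν := by
    apply RModHom.app_injective
    funext X
    apply LinearMap.ext
    intro m
    show θ.app X ((η.app X + ν.app X) m) = θ.app X (η.app X m) + θ.app X (ν.app X m)
    rw [LinearMap.add_apply, map_add]
  map_smul' k η := by
    apply RModHom.app_injective
    funext X
    apply LinearMap.ext
    intro m
    show θ.app X ((k • η.app X) m) = k • θ.app X (η.app X m)
    rw [LinearMap.smul_apply, map_smul]

/-- The (covariant) Hom-functor `Hom(M, -) : Mod-D ⥤ Vect_K` for a module `M` over a
`K`-linear category `D`. -/
def homFunctor {D : LinCat K} (M : RMod K D) : RMod K D ⥤ ModuleCat K where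
  obj N := ModuleCat.of K (M ⟶ N)
  map {N P} θ := ModuleCat.ofHom (postcompLin M θ)
  map_id := by intros; rfl
  map_comp := by intros; rfl

/-- The representable right module `h_X = Hom_D(-, X)`. -/
def reprR (D : LinCat K) (X : D.Obj) : RMod K D where
  ob Y := D.Hom Y X
  map {Y Z} := D.comp (X := Y) (Y := Z) (Z := X)
  map_id Y := by
    apply LinearMap.ext
    intro g
    exact D.id_comp g
  map_comp {Y Z W} f g := by
    apply LinearMap.ext
    intro m
    exact D.assoc f g m

/-- A right module over a `K`-linear category is finitely generated if it admits a
finite family of generators. -/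
def RMod.FG {D : LinCat K} (M : RMod K D) : Prop :=
  ∃ (n : ℕ) (Xs : Fin n → D.Obj) (ms : ∀ i, M.ob (Xs i)),
    ∀ (Y : D.Obj) (y : M.ob Y), ∃ f : ∀ i, D.Hom Y (Xs i),
      y = ∑ i, M.map (f i) (ms i)

/-- A submodule of a right module over a `K`-linear category. -/
@[ext] structure RSubmod {D : LinCat K} (M : RMod K D) where
  sub : ∀ X, Submodule K (M.ob X)
  closed : ∀ {X Y : D.Obj} (f : D.Hom X Y) (m : M.ob Y), m ∈ sub Y → M.map f m ∈ sub X

instance {D : LinCat K} (M : RMod K D) : PartialOrder (RSubmod M) where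
  le A B := ∀ X, A.sub X ≤ B.sub X
  le_refl A X := le_rfl
  le_trans A B C hab hbc X := (hab X).trans (hbc X)
  le_antisymm A B hab hba := by
    ext X x
    exact ⟨fun h => hab X h, fun h => hba X h⟩

/-- A right module over a `K`-linear category is noetherian if its submodules satisfy
the ascending chain condition. -/
def RMod.Noetherian {D : LinCat K} (M : RMod K D) : Prop :=
  ∀ f : ℕ →o RSubmod M, ∃ n, ∀ m, n ≤ m → f m = f n

/-- A `K`-linear category is right noetherian if all the representable right modules
are noetherian. -/
def LinCat.RightNoetherian (D : LinCat K) : Prop :=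
  ∀ X : D.Obj, (reprR D X).Noetherian

/-- A left `H`-category is `H`-locally finite if all its `Hom`-spaces are locally
finite `H`-modules. -/
def LeftHCat.LocFin (C : LeftHCat K H) : Prop :=
  ∀ (X Y : C.Obj) (f : C.Hom X Y),
    FiniteDimensional K (Submodule.span K (Set.range (fun h : H => C.act X Y h f)))

/-- A right `C#H`-module is `H`-locally finite (i.e. belongs to `mod-(C#H)`) if each of
its values is a locally finite `H`-module for the canonical `H`-action. -/
def RMod.HLocFin {C : LeftHCat K H} {S : SmashCat C} (M : RMod K S.lin) : Prop :=
  ∀ (X : C.Obj) (v : M.ob X),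
    FiniteDimensional K (Submodule.span K (Set.range (fun h : H => actOn S M X h v)))

/-- The property of being a Grothendieck category: abelian, cocomplete, with exact
filtered colimits (AB5) and a separator. -/
def IsGrothendieckCat (A : Type*) [Category A] : Prop :=
  ∃ (_ : Abelian A) (_ : HasColimits A) (hf : HasFilteredColimits A),
    @AB5 A _ hf ∧ ∃ G : A, IsSeparator G

end PART5

section PART6
open CategoryTheory.Limits ZeroObject

/-- A first-quadrant cohomological spectral sequence in an abelian category `A`,
with second page `E₂` and converging to the graded abutment `abut`. -/
structure FirstQuadrantCohomSS (A : Type*) [Category A] [Abelian A]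
    (E₂ : ℤ → ℤ → A) (abut : ℤ → A) where
  /-- the pages of the spectral sequence, defined for `r ≥ 2` -/
  page : ℕ → ℤ → ℤ → A
  /-- the second page is the given `E₂` -/
  pageTwo : ∀ p q : ℤ, 0 ≤ p → 0 ≤ q → (page 2 p q ≅ E₂ p q)
  /-- first quadrant: pages vanish outside `p, q ≥ 0` -/
  vanish : ∀ (r : ℕ) (p q : ℤ), p < 0 ∨ q < 0 → IsZero (page r p q)
  /-- the differentials, of bidegree `(r, 1 - r)` -/
  d : ∀ (r : ℕ) (p q : ℤ), page r p q ⟶ page r (p + r) (q + 1 - r)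
  d_comp_d : ∀ (r : ℕ) (p q : ℤ), d r p q ≫ d r (p + r) (q + 1 - r) = 0
  /-- each page is the homology of the previous one -/
  turn : ∀ (r : ℕ) (p q : ℤ), 2 ≤ r →
    (page (r + 1) (p + r) (q + 1 - r) ≅
      (CategoryTheory.ShortComplex.mk (d r p q) (d r (p + r) (q + 1 - r))
        (d_comp_d r p q)).homology)
  /-- the page at which position `(p,q)` has stabilized -/
  stab : ℤ → ℤ → ℕ
  stab_ge : ∀ p q, 2 ≤ stab p q
  hstab : ∀ (p q : ℤ) (r : ℕ), stab p q ≤ r →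
    Nonempty (page r p q ≅ page (stab p q) p q)
  /-- a (finite, exhaustive) decreasing filtration on each piece of the abutment -/
  filt : ∀ n : ℤ, ℤ → Subobject (abut n)
  filt_antitone : ∀ n, Antitone (filt n)
  filt_top : ∀ (n p : ℤ), 0 ≤ n → p ≤ 0 → filt n p = ⊤
  filt_bot : ∀ (n p : ℤ), 0 ≤ n → n < p → filt n p = ⊥
  /-- the graded pieces of the filtration are the stable values of the pages -/
  graded : ∀ (n p : ℤ), 0 ≤ p → p ≤ n →
    Nonempty ((cokernel (Subobject.ofLE (filt n (p + 1)) (filt n p)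
      (filt_antitone n (by omega)))) ≅ page (stab p (n - p)) p (n - p))

end PART6

section PART7
open CategoryTheory.Limits
variable (K : Type) [Field K] (H : Type) [Ring H] [HopfAlgebra K H]

/-- The property that a linear map `V →ₗ V ⊗ H` is a (counital, coassociative) right
`H`-comodule structure. -/
def IsComodStr (V : Type) [AddCommGroup V] [Module K V]
    (coact : V →ₗ[K] V ⊗[K] H) : Prop :=
  ((TensorProduct.rid K V).toLinearMap ∘ₗ
      (LinearMap.lTensor V (Coalgebra.counit (R := K) (A := H))) ∘ₗ coact = LinearMap.id) ∧
  ((TensorProduct.assoc K V H H).toLinearMap ∘ₗ (LinearMap.rTensor H coact) ∘ₗ coact =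
      (LinearMap.lTensor V (Coalgebra.comul (R := K) (A := H))) ∘ₗ coact)

/-- A right `H`-comodule (an object of `Comod-H`). -/
structure HComod where
  V : Type
  [addV : AddCommGroup V]
  [modV : Module K V]
  coact : V →ₗ[K] V ⊗[K] H
  isComod : IsComodStr K H V coact

attribute [instance] HComod.addV HComod.modV

variable {K H}

/-- Morphisms of right `H`-comodules. -/
@[ext] structure HComodHom (M N : HComod K H) where
  f : M.V →ₗ[K] N.V
  hf : ∀ m : M.V, N.coact (f m) = (LinearMap.rTensor H f) (M.coact m)

instance HComod.instCategory : Category (HComod K H) where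
  Hom M N := HComodHom M N
  id M := ⟨LinearMap.id, by
    intro m
    show M.coact m = (LinearMap.rTensor H LinearMap.id) (M.coact m)
    rw [LinearMap.rTensor_id]
    rfl⟩
  comp {M N P} g₁ g₂ := ⟨g₂.f ∘ₗ g₁.f, by
    intro m
    show P.coact (g₂.f (g₁.f m)) = _
    rw [g₂.hf, g₁.hf]
    rw [← LinearMap.comp_apply, ← LinearMap.rTensor_comp]⟩
  id_comp := by intros; rfl
  comp_id := by intros; rfl
  assoc := by intros; rfl

/-- The `H`-coinvariants `M^{coH} = {m | ρ(m) = m ⊗ 1}` of a right `H`-comodule. -/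
def HComod.coinvariants (M : HComod K H) : Submodule K M.V where
  carrier := {v | M.coact v = v ⊗ₜ[K] (1 : H)}
  add_mem' := by
    intro a b ha hb
    show M.coact (a + b) = (a + b) ⊗ₜ[K] (1 : H)
    rw [map_add, ha, hb, TensorProduct.add_tmul]
  zero_mem' := by
    show M.coact 0 = (0 : M.V) ⊗ₜ[K] (1 : H)
    rw [map_zero, TensorProduct.zero_tmul]
  smul_mem' := by
    intro k v hv
    show M.coact (k • v) = (k • v) ⊗ₜ[K] (1 : H)
    rw [map_smul, hv, TensorProduct.smul_tmul']

/-- The `H`-coinvariants functor `Comod-H ⥤ Vect_K`. -/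
def coinvariantsFunctor : HComod K H ⥤ ModuleCat K where
  obj M := ModuleCat.of K M.coinvariants
  map {M N} g := ModuleCat.ofHom (g.f.restrict (p := M.coinvariants) (q := N.coinvariants)
    (by
      intro v hv
      show N.coact (g.f v) = g.f v ⊗ₜ[K] 1
      rw [g.hf, hv]
      simp))
  map_id := by intros; rfl
  map_comp := by intros; rfl

variable (K H)

/-- A right co-`H`-category: a `K`-linear category enriched in right `H`-comodules,
i.e. `ρ(id_X) = id_X ⊗ 1` and `ρ(v ∘ u) = ∑ v₀ ∘ u₀ ⊗ v₁ u₁`. -/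
structure CoHCat extends LinCat K where
  coact : ∀ X Y, Hom X Y →ₗ[K] Hom X Y ⊗[K] H
  isComod : ∀ X Y, IsComodStr K H (Hom X Y) (coact X Y)
  coact_idm : ∀ X, coact X X (idm X) = (idm X) ⊗ₜ[K] (1 : H)
  coact_comp : ∀ {X Y Z : Obj} (u : Hom X Y) (v : Hom Y Z),
    coact X Z (comp u v) =
      ((TensorProduct.map (TensorProduct.lift (comp (X := X) (Y := Y) (Z := Z)))
          ((LinearMap.mul' K H) ∘ₗ (TensorProduct.comm K H H).toLinearMap)) ∘ₗ
        (TensorProduct.tensorTensorTensorComm K (Hom X Y) H (Hom Y Z) H).toLinearMap)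
      ((coact X Y u) ⊗ₜ[K] (coact Y Z v))

variable {K H}

/-- A left module over a `K`-linear category: a `K`-linear covariant functor to
vector spaces. -/
structure LMod (D : LinCat K) where
  ob : D.Obj → Type
  [addOb : ∀ X, AddCommGroup (ob X)]
  [modOb : ∀ X, Module K (ob X)]
  map : ∀ {X Y : D.Obj}, D.Hom X Y →ₗ[K] (ob X →ₗ[K] ob Y)
  map_id : ∀ X, map (D.idm X) = LinearMap.id
  map_comp : ∀ {X Y Z : D.Obj} (f : D.Hom X Y) (g : D.Hom Y Z),
    map (D.comp f g) = (map g) ∘ₗ (map f)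

attribute [instance] LMod.addOb LMod.modOb

/-- A morphism of left modules over a `K`-linear category. -/
@[ext] structure LModHom {D : LinCat K} (M N : LMod D) where
  app : ∀ X, M.ob X →ₗ[K] N.ob X
  natural : ∀ {X Y : D.Obj} (f : D.Hom X Y) (m : M.ob X),
    app Y (M.map f m) = N.map f (app X m)

instance LMod.instCategory (D : LinCat K) : Category (LMod D) where
  Hom M N := LModHom M N
  id M := ⟨fun _ => LinearMap.id, by intros; rfl⟩
  comp η θ := ⟨fun X => (θ.app X).comp (η.app X), by
    intro X Y f m
    simp only [LinearMap.comp_apply, η.natural, θ.natural]⟩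
  id_comp := by intros; rfl
  comp_id := by intros; rfl
  assoc := by intros; rfl

/-- The representable left module `ₓh = Hom_D(X, -)`. -/
def reprL (D : LinCat K) (X : D.Obj) : LMod D where
  ob Y := D.Hom X Y
  map {Y Z} := (D.comp (X := X) (Y := Y) (Z := Z)).flip
  map_id Y := by
    apply LinearMap.ext
    intro g
    exact D.comp_id g
  map_comp {Y Z W} f g := by
    apply LinearMap.ext
    intro m
    exact (D.assoc m f g).symm

/-- A left module over a `K`-linear category is finitely generated if it admits a
finite family of generators. -/
def LMod.FG {D : LinCat K} (M : LMod D) : Prop :=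
  ∃ (n : ℕ) (Xs : Fin n → D.Obj) (ms : ∀ i, M.ob (Xs i)),
    ∀ (Y : D.Obj) (y : M.ob Y), ∃ f : ∀ i, D.Hom (Xs i) Y,
      y = ∑ i, M.map (f i) (ms i)

/-- A submodule of a left module over a `K`-linear category. -/
@[ext] structure LSubmod {D : LinCat K} (M : LMod D) where
  sub : ∀ X, Submodule K (M.ob X)
  closed : ∀ {X Y : D.Obj} (f : D.Hom X Y) (m : M.ob X), m ∈ sub X → M.map f m ∈ sub Y

instance {D : LinCat K} (M : LMod D) : PartialOrder (LSubmod M) where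
  le A B := ∀ X, A.sub X ≤ B.sub X
  le_refl A X := le_rfl
  le_trans A B C hab hbc X := (hab X).trans (hbc X)
  le_antisymm A B hab hba := by
    ext X x
    exact ⟨fun h => hab X h, fun h => hba X h⟩

/-- A left module is noetherian if its submodules satisfy the ascending chain
condition. -/
def LMod.Noetherian {D : LinCat K} (M : LMod D) : Prop :=
  ∀ f : ℕ →o LSubmod M, ∃ n, ∀ m, n ≤ m → f m = f n

/-- A `K`-linear category is left noetherian if all representable left modules are
noetherian. -/
def LinCat.LeftNoetherian (D : LinCat K) : Prop :=
  ∀ X : D.Obj, (reprL D X).Noetherian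

/-- The Sweedler right-hand side `∑ M(f₀)(m₀) ⊗ f₁ m₁` of the compatibility condition
for relative `(D,H)`-Hopf modules. -/
def relHopfRHS {D : CoHCat K H} (M : LMod D.toLinCat)
    {X Y : D.Obj} (ρf : D.Hom X Y ⊗[K] H) (ρm : M.ob X ⊗[K] H) : M.ob Y ⊗[K] H :=
  ((TensorProduct.map (TensorProduct.lift (M.map (X := X) (Y := Y)))
      (LinearMap.mul' K H)) ∘ₗ
    (TensorProduct.tensorTensorTensorComm K (D.Hom X Y) H (M.ob X) H).toLinearMap)
  (ρf ⊗ₜ[K] ρm)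

/-- A relative `(D,H)`-Hopf module over a right co-`H`-category `D`. -/
structure RelHopfMod (D : CoHCat K H) extends LMod D.toLinCat where
  coact : ∀ X, ob X →ₗ[K] ob X ⊗[K] H
  isComod : ∀ X, IsComodStr K H (ob X) (coact X)
  compat : ∀ {X Y : D.Obj} (f : D.Hom X Y) (m : ob X),
    coact Y (map f m) = relHopfRHS toLMod (D.coact X Y f) (coact X m)

/-- Morphisms of relative `(D,H)`-Hopf modules: `D`-module morphisms whose components
are `H`-colinear. -/
@[ext] structure RelHopfHom {D : CoHCat K H} (M N : RelHopfMod D) where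
  hom : M.toLMod ⟶ N.toLMod
  colin : ∀ (X : D.Obj) (m : M.ob X),
    N.coact X (hom.app X m) = (LinearMap.rTensor H (hom.app X)) (M.coact X m)

instance RelHopfMod.instCategory (D : CoHCat K H) : Category (RelHopfMod D) where
  Hom M N := RelHopfHom M N
  id M := ⟨𝟙 M.toLMod, by
    intro X m
    show M.coact X m = (LinearMap.rTensor H LinearMap.id) (M.coact X m)
    rw [LinearMap.rTensor_id]
    rfl⟩
  comp {M N P} η θ := ⟨η.hom ≫ θ.hom, by
    intro X m
    show P.coact X (θ.hom.app X (η.hom.app X m)) = _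
    rw [θ.colin, η.colin, ← LinearMap.comp_apply, ← LinearMap.rTensor_comp]
    rfl⟩
  id_comp := by intros; rfl
  comp_id := by intros; rfl
  assoc := by intros; rfl

namespace LModHom

variable {D : LinCat K} {M N : LMod D}

instance : Zero (LModHom M N) := ⟨⟨fun _ => 0, by intros; simp⟩⟩

instance : Add (LModHom M N) :=
  ⟨fun η ν => ⟨fun X => η.app X + ν.app X, by
    intro X Y f m
    simp [η.natural, ν.natural]⟩⟩

instance : Neg (LModHom M N) :=
  ⟨fun η => ⟨fun X => -η.app X, by intro X Y f m; simp [η.natural]⟩⟩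

instance : Sub (LModHom M N) :=
  ⟨fun η ν => ⟨fun X => η.app X - ν.app X, by
    intro X Y f m
    simp [η.natural, ν.natural]⟩⟩

instance : SMul K (LModHom M N) :=
  ⟨fun k η => ⟨fun X => k • η.app X, by intro X Y f m; simp [η.natural]⟩⟩

instance : SMul ℕ (LModHom M N) :=
  ⟨fun n η => ⟨fun X => n • η.app X, by intro X Y f m; simp [η.natural]⟩⟩

instance : SMul ℤ (LModHom M N) :=
  ⟨fun n η => ⟨fun X => n • η.app X, by intro X Y f m; simp [η.natural]⟩⟩

theorem app_injective :
    Function.Injective (fun (η : LModHom M N) => η.app) := by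
  intro η ν h; ext X m; exact congrFun (congrArg (fun u => (u X : M.ob X → N.ob X)) h) m

instance : AddCommGroup (LModHom M N) :=
  Function.Injective.addCommGroup (fun η => η.app) app_injective
    rfl (fun _ _ => rfl) (fun _ => rfl) (fun _ _ => rfl) (fun _ _ => rfl) (fun _ _ => rfl)

instance : Module K (LModHom M N) :=
  Function.Injective.module K
    ⟨⟨fun η => η.app, rfl⟩, fun _ _ => rfl⟩ app_injective (fun _ _ => rfl)

end LModHom

instance {D : LinCat K} (M N : LMod D) : AddCommGroup (M ⟶ N) :=
  inferInstanceAs (AddCommGroup (LModHom M N))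

instance {D : LinCat K} (M N : LMod D) : Module K (M ⟶ N) :=
  inferInstanceAs (Module K (LModHom M N))

/-- Post-composition with a module morphism, as a linear map on `Hom`-spaces. -/
def postcompLinL {D : LinCat K} (M : LMod D) {N P : LMod D} (θ : N ⟶ P) :
    (M ⟶ N) →ₗ[K] (M ⟶ P) where
  toFun η := η ≫ θ
  map_add' η ν := by
    apply LModHom.app_injective
    funext X
    apply LinearMap.ext
    intro m
    show θ.app X ((η.app X + ν.app X) m) = θ.app X (η.app X m) + θ.app X (ν.app X m)
    rw [LinearMap.add_apply, map_add]
  map_smul' k η := by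
    apply LModHom.app_injective
    funext X
    apply LinearMap.ext
    intro m
    show θ.app X ((k • η.app X) m) = k • θ.app X (η.app X m)
    rw [LinearMap.smul_apply, map_smul]

/-- The (covariant) Hom-functor `Hom(M, -) : D-Mod ⥤ Vect_K` for a left module `M` over
a `K`-linear category `D`. -/
def homFunctorL {D : LinCat K} (M : LMod D) : LMod D ⥤ ModuleCat K where
  obj N := ModuleCat.of K (M ⟶ N)
  map {N P} θ := ModuleCat.ofHom (postcompLinL M θ)
  map_id := by intros; rfl
  map_comp := by intros; rfl

end PART7

section LocFinPart
variable {K : Type} [Field K] {H : Type} [Ring H] [HopfAlgebra K H]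

theorem HLMod.locFin_act_mem (W : HLMod K H) (h : H) {v : W.V} (hv : v ∈ W.locFin) :
    W.act h v ∈ W.locFin := by
  haveI hfd : FiniteDimensional K
      (Submodule.span K (Set.range (fun h' : H => W.act h' v))) := hv
  have hsub : Set.range (fun h' : H => W.act h' (W.act h v)) ⊆
      ↑(Submodule.span K (Set.range (fun h' : H => W.act h' v))) := by
    rintro x ⟨h', rfl⟩
    have hx : W.act h' (W.act h v) = W.act (h' * h) v := by rw [W.act_mul]; rfl
    show W.act h' (W.act h v) ∈ _
    rw [hx]
    exact Submodule.subset_span ⟨h' * h, rfl⟩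
  show W.LocFinElt (W.act h v)
  exact Submodule.finiteDimensional_of_le (Submodule.span_le.2 hsub)

/-- The locally finite part `W^{(H)}` of a left `H`-module, as a left `H`-module. -/
def HLMod.locFinMod (W : HLMod K H) : HLMod K H where
  V := ↥W.locFin
  act :=
    { toFun := fun h => (W.act h).restrict (p := W.locFin) (q := W.locFin)
        (fun _ hv => W.locFin_act_mem h hv)
      map_add' := by
        intro a b
        apply LinearMap.ext
        intro v
        apply Subtype.ext
        show W.act (a + b) ↑v = W.act a ↑v + W.act b ↑v
        rw [map_add W.act a b]
        rfl
      map_smul' := by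
        intro k a
        apply LinearMap.ext
        intro v
        apply Subtype.ext
        show W.act (k • a) ↑v = k • W.act a ↑v
        rw [map_smul W.act k a]
        rfl }
  act_one := by
    apply LinearMap.ext
    intro v
    apply Subtype.ext
    show W.act 1 ↑v = ↑v
    rw [W.act_one]
    rfl
  act_mul := by
    intro a b
    apply LinearMap.ext
    intro v
    apply Subtype.ext
    show W.act (a * b) ↑v = W.act a (W.act b ↑v)
    rw [W.act_mul]
    rfl

/-- The category `H-mod` of locally finite left `H`-modules, as a full subcategory of
`H-Mod`. -/
abbrev HmodCat (K : Type) [Field K] (H : Type) [Ring H] [HopfAlgebra K H] :=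
  CategoryTheory.ObjectProperty.FullSubcategory (fun W : HLMod K H => W.IsLocFin)

end LocFinPart

section HopfComatrix
open Coalgebra

variable {K : Type} [Field K] {H : Type} [Ring H] [HopfAlgebra K H]

/-- Coordinate extraction along a basis of `H` on the left tensor factor. -/
noncomputable def coordL {ι : Type*} (ℬ : Module.Basis ι K H) (j : ι)
    (X : Type) [AddCommGroup X] [Module K X] : H ⊗[K] X →ₗ[K] X :=
  (TensorProduct.lid K X).toLinearMap ∘ₗ (LinearMap.rTensor X (ℬ.coord j))

lemma coordL_tmul {ι : Type*} (ℬ : Module.Basis ι K H) (j : ι) {X : Type} [AddCommGroup X] [Module K X]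
    (h : H) (x : X) : coordL ℬ j X (h ⊗ₜ[K] x) = ℬ.repr h j • x := by
  simp [coordL]

lemma coordL_natural {ι : Type*} (ℬ : Module.Basis ι K H) (j : ι) {X Y : Type}
    [AddCommGroup X] [Module K X] [AddCommGroup Y] [Module K Y] (f : X →ₗ[K] Y) (w : H ⊗[K] X) :
    coordL ℬ j Y (LinearMap.lTensor H f w) = f (coordL ℬ j X w) := by
  induction w using TensorProduct.induction_on with
  | zero => simp
  | tmul h x => simp [coordL_tmul, map_smul]
  | add a b ha hb => simp only [map_add, ha, hb]

lemma exists_leg_finset {ι : Type*} (ℬ : Module.Basis ι K H) {X : Type}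
    [AddCommGroup X] [Module K X] (w : H ⊗[K] X) :
    ∃ s₀ : Finset ι, ∀ s' : Finset ι, s₀ ⊆ s' →
      w = ∑ j ∈ s', ℬ j ⊗ₜ[K] coordL ℬ j X w := by
  classical
  induction w using TensorProduct.induction_on with
  | zero => exact ⟨∅, fun s' _ => by simp⟩
  | tmul h x =>
      refine ⟨(ℬ.repr h).support, fun s' hs' => ?_⟩
      have h1 : ∑ j ∈ s', (ℬ.repr h) j • ℬ j = h := by
        rw [← Finset.sum_subset hs'
          (fun j _ hj => by rw [Finsupp.notMem_support_iff.mp hj, zero_smul])]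
        have h2 := ℬ.linearCombination_repr h
        rw [Finsupp.linearCombination_apply, Finsupp.sum] at h2
        exact h2
      calc h ⊗ₜ[K] x = (∑ j ∈ s', (ℬ.repr h) j • ℬ j) ⊗ₜ[K] x := by rw [h1]
        _ = ∑ j ∈ s', ℬ j ⊗ₜ[K] coordL ℬ j X (h ⊗ₜ[K] x) := by
            rw [sum_tmul]
            exact Finset.sum_congr rfl fun j _ => by
              rw [coordL_tmul, smul_tmul]
  | add a b ha hb =>
      obtain ⟨sa, hsa⟩ := ha
      obtain ⟨sb, hsb⟩ := hb
      refine ⟨sa ∪ sb, fun s' hs' => ?_⟩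
      simp only [map_add, tmul_add, Finset.sum_add_distrib]
      rw [← hsa s' (Finset.union_subset_iff.mp hs').1, ← hsb s' (Finset.union_subset_iff.mp hs').2]

theorem exists_coideal (k : H) :
    ∃ D : Submodule K H, FiniteDimensional K ↥D ∧ k ∈ D ∧
      ∀ x ∈ D, (Coalgebra.comul (R := K) x) ∈
        LinearMap.range (LinearMap.lTensor H D.subtype) := by
  classical
  set ℬ := Module.Basis.ofVectorSpace K H with hB
  obtain ⟨s₀, hs₀⟩ := exists_leg_finset ℬ (Coalgebra.comul (R := K) k)
  set g : _ → H := fun j => coordL ℬ j H (Coalgebra.comul (R := K) k) with hg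
  set D : Submodule K H := Submodule.span K ↑(s₀.image g) with hD
  have hgD : ∀ j ∈ s₀, g j ∈ D := fun j hj =>
    Submodule.subset_span (by simpa using Finset.mem_image_of_mem g hj)
  have hfd : FiniteDimensional K ↥D := FiniteDimensional.span_of_finite K (Finset.finite_toSet _)
  have ht : Coalgebra.comul (R := K) k = ∑ j ∈ s₀, ℬ j ⊗ₜ[K] g j := hs₀ s₀ subset_rfl
  -- k ∈ D
  have hkD : k ∈ D := by
    have h1 : (1 : K) ⊗ₜ[K] k =
        ∑ j ∈ s₀, Coalgebra.counit (R := K) (ℬ j) ⊗ₜ[K] g j := by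
      rw [← Coalgebra.rTensor_counit_comul (R := K) k, ht, map_sum]
      exact Finset.sum_congr rfl fun j _ => rfl
    have h2 := congrArg (TensorProduct.lid K H) h1
    simp only [map_sum, lid_tmul] at h2
    rw [one_smul] at h2
    rw [h2]
    exact Submodule.sum_mem _ fun j hj => Submodule.smul_mem _ _ (hgD j hj)
  -- generators: comul (g j) lands in H ⊗ D
  have hcore : ∀ j, Coalgebra.comul (R := K) (g j) ∈
      LinearMap.range (LinearMap.lTensor H D.subtype) := by
    intro j
    have h1 : Coalgebra.comul (R := K) (g j)
        = coordL ℬ j (H ⊗[K] H)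
            (LinearMap.lTensor H (Coalgebra.comul (R := K) (A := H))
              (Coalgebra.comul (R := K) k)) := by
      rw [coordL_natural]
    have h2 : LinearMap.lTensor H (Coalgebra.comul (R := K) (A := H))
          (Coalgebra.comul (R := K) k)
        = TensorProduct.assoc K H H H
            ((LinearMap.rTensor H (Coalgebra.comul (R := K) (A := H)))
              (Coalgebra.comul (R := K) k)) :=
      (Coalgebra.coassoc_apply k).symm
    rw [h1, h2, ht]
    simp only [map_sum]
    refine Submodule.sum_mem _ fun i hi => ?_
    -- coordL j (assoc ((comul (ℬ i)) ⊗ₜ g i)) ∈ range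
    have h3 : (LinearMap.rTensor H (Coalgebra.comul (R := K) (A := H))) (ℬ i ⊗ₜ[K] g i)
        = (Coalgebra.comul (R := K) (ℬ i)) ⊗ₜ[K] g i := rfl
    rw [h3]
    have h4 : ∀ (s : H ⊗[K] H) (y : H), y ∈ D →
        coordL ℬ j (H ⊗[K] H) (TensorProduct.assoc K H H H (s ⊗ₜ[K] y)) ∈
          LinearMap.range (LinearMap.lTensor H D.subtype) := by
      intro s y hy
      induction s using TensorProduct.induction_on with
      | zero => simp
      | tmul a b =>
          rw [assoc_tmul, coordL_tmul]
          exact Submodule.smul_mem _ _ ⟨b ⊗ₜ[K] ⟨y, hy⟩, rfl⟩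
      | add u v hu hv =>
          rw [add_tmul, map_add, map_add]
          exact Submodule.add_mem _ hu hv
    exact h4 _ _ (hgD i hi)
  refine ⟨D, hfd, hkD, ?_⟩
  intro x hx
  have : D ≤ Submodule.comap (Coalgebra.comul (R := K) (A := H))
      (LinearMap.range (LinearMap.lTensor H D.subtype)) := by
    rw [hD, Submodule.span_le]
    intro y hy
    obtain ⟨j, hj, rfl⟩ := Finset.mem_image.mp (Finset.mem_coe.mp hy)
    exact hcore j
  exact this hx

/-- A finite comatrix family in a Hopf algebra: `Δ bᵢⱼ = ∑ₗ bᵢₗ ⊗ bₗⱼ`, `ε bᵢⱼ = δᵢⱼ`. -/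
structure Comatrix (K H : Type) [Field K] [Ring H] [HopfAlgebra K H] where
  ι : Type
  [fin : Fintype ι]
  [dec : DecidableEq ι]
  b : ι → ι → H
  comul_b : ∀ i j, Coalgebra.comul (R := K) (b i j) = ∑ l, b i l ⊗ₜ[K] b l j
  counit_b : ∀ i j, Coalgebra.counit (R := K) (b i j) = if i = j then (1 : K) else 0

attribute [instance] Comatrix.fin Comatrix.dec

noncomputable def coordR {D : Submodule K H} {r : ℕ} (d : Module.Basis (Fin r) K ↥D) (i : Fin r)
    (X : Type) [AddCommGroup X] [Module K X] : X ⊗[K] ↥D →ₗ[K] X :=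
  (TensorProduct.rid K X).toLinearMap ∘ₗ (LinearMap.lTensor X (d.coord i))

lemma coordR_tmul {D : Submodule K H} {r : ℕ} (d : Module.Basis (Fin r) K ↥D) (i : Fin r)
    {X : Type} [AddCommGroup X] [Module K X] (x : X) (δ : ↥D) :
    coordR d i X (x ⊗ₜ[K] δ) = d.repr δ i • x := by
  simp [coordR]

lemma coe_basis_sum {V : Type*} [AddCommGroup V] [Module K V] {D : Submodule K V}
    {r : ℕ} (d : Module.Basis (Fin r) K ↥D) (δ : ↥D) :
    (δ : V) = ∑ i, d.repr δ i • (d i : V) := by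
  have h1 := congrArg (Submodule.subtype D) (d.sum_repr δ)
  simp only [map_sum, map_smul, Submodule.coe_subtype] at h1
  exact h1.symm

lemma lTensor_subtype_eq_sum {D : Submodule K H} {r : ℕ} (d : Module.Basis (Fin r) K ↥D)
    {X : Type} [AddCommGroup X] [Module K X] (w : X ⊗[K] ↥D) :
    (LinearMap.lTensor X D.subtype) w = ∑ i, (coordR d i X w) ⊗ₜ[K] ((d i : H)) := by
  induction w using TensorProduct.induction_on with
  | zero => simp
  | tmul x δ =>
      rw [LinearMap.lTensor_tmul]
      show x ⊗ₜ[K] ((δ : H)) = _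
      conv_lhs => rw [coe_basis_sum d δ]
      rw [tmul_sum]
      exact Finset.sum_congr rfl fun i _ => by
        rw [coordR_tmul, tmul_smul, smul_tmul']
  | add u v hu hv =>
      simp only [map_add, hu, hv, add_tmul, Finset.sum_add_distrib]

lemma coordR_sum {D : Submodule K H} {r : ℕ} (d : Module.Basis (Fin r) K ↥D)
    {X : Type} [AddCommGroup X] [Module K X] (c : Fin r → X) (i : Fin r) :
    coordR d i X (∑ j, c j ⊗ₜ[K] d j) = c i := by
  rw [map_sum]
  have h1 : ∀ j, coordR d i X (c j ⊗ₜ[K] d j) = (if j = i then (1:K) else 0) • c j := by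
    intro j
    rw [coordR_tmul, Module.Basis.repr_self, Finsupp.single_apply]
  simp only [h1, ite_smul, one_smul, zero_smul]
  rw [Finset.sum_ite_eq' Finset.univ i c]
  simp

lemma sum_tmul_basis_cancel {D : Submodule K H} {r : ℕ} (d : Module.Basis (Fin r) K ↥D)
    {X : Type} [AddCommGroup X] [Module K X]
    (c c' : Fin r → X) (h : ∑ i, c i ⊗ₜ[K] ((d i : H)) = ∑ i, c' i ⊗ₜ[K] ((d i : H))) :
    c = c' := by
  have hinj : Function.Injective (LinearMap.lTensor X D.subtype) :=
    Module.Flat.lTensor_preserves_injective_linearMap _ (Submodule.injective_subtype D)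
  have h2 : (∑ i, c i ⊗ₜ[K] (d i) : X ⊗[K] ↥D) = ∑ i, c' i ⊗ₜ[K] (d i) := by
    apply hinj
    simpa only [map_sum, LinearMap.lTensor_tmul, Submodule.coe_subtype] using h
  funext i
  rw [← coordR_sum d c i, ← coordR_sum d c' i, h2]

set_option synthInstance.maxHeartbeats 400000 in
theorem exists_comatrix (k : H) :
    ∃ E : Comatrix K H, k ∈ Submodule.span K (Set.range fun p : E.ι × E.ι => E.b p.1 p.2) := by
  classical
  obtain ⟨D, hfd, hkD, hcomul⟩ := exists_coideal (K := K) k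
  set r := Module.finrank K ↥D with hr
  set d : Module.Basis (Fin r) K ↥D := Module.finBasis K ↥D with hd
  have hw : ∀ j : Fin r, ∃ w : H ⊗[K] ↥D,
      (LinearMap.lTensor H D.subtype) w = Coalgebra.comul (R := K) ((d j : H)) :=
    fun j => hcomul _ (d j).2
  choose w hw using hw
  set b : Fin r → Fin r → H := fun i j => coordR d i H (w j) with hbdef
  have hΔ : ∀ j, Coalgebra.comul (R := K) ((d j : H)) = ∑ i, b i j ⊗ₜ[K] ((d i : H)) := by
    intro j; rw [← hw j, lTensor_subtype_eq_sum d]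
  -- the counit relation
  have hcounit : ∀ i j, Coalgebra.counit (R := K) (b i j) = if i = j then (1:K) else 0 := by
    intro i j
    have h1 := Coalgebra.rTensor_counit_comul (R := K) ((d j : H))
    rw [hΔ j, map_sum] at h1
    have h2 := congrArg (TensorProduct.lid K H) h1
    simp only [map_sum, LinearMap.rTensor_tmul, lid_tmul] at h2
    have h3 : ∑ i, (Coalgebra.counit (R := K) (b i j) - if i = j then (1:K) else 0)
        • ((d i : H)) = 0 := by
      simp only [sub_smul, ite_smul, one_smul, zero_smul, Finset.sum_sub_distrib]
      rw [h2, Finset.sum_ite_eq' Finset.univ j (fun i => ((d i : H)))]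
      simp
    have hli : LinearIndependent K (fun i : Fin r => ((d i : H))) :=
      d.linearIndependent.map' D.subtype (Submodule.ker_subtype D)
    have h4 := (Fintype.linearIndependent_iff.mp hli) _ h3
    have h5 := h4 i
    exact sub_eq_zero.mp h5
  -- the comatrix comultiplication relation
  have hcomulb : ∀ l j, Coalgebra.comul (R := K) (b l j) = ∑ i, b i j ⊗ₜ[K] b l i := by
    intro l j
    have h0 := Coalgebra.coassoc_symm_apply (R := K) ((d j : H))
    -- RHS of h0: rTensor comul (comul dⱼ) = Σᵢ (comul bᵢⱼ) ⊗ dᵢ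
    have hA : (Coalgebra.comul (R := K) (A := H)).rTensor H
        (Coalgebra.comul (R := K) ((d j : H)))
        = ∑ i, (Coalgebra.comul (R := K) (b i j)) ⊗ₜ[K] ((d i : H)) := by
      rw [hΔ j, map_sum]
      exact Finset.sum_congr rfl fun i _ => rfl
    have hB : (Coalgebra.comul (R := K) (A := H)).lTensor H
        (Coalgebra.comul (R := K) ((d j : H)))
        = ∑ i, ∑ l', b i j ⊗ₜ[K] (b l' i ⊗ₜ[K] ((d l' : H))) := by
      rw [hΔ j, map_sum]
      refine Finset.sum_congr rfl fun i _ => ?_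
      rw [LinearMap.lTensor_tmul, hΔ i, tmul_sum]
    have hC : (TensorProduct.assoc K H H H).symm
          ((Coalgebra.comul (R := K) (A := H)).lTensor H
            (Coalgebra.comul (R := K) ((d j : H))))
        = ∑ l', (∑ i, b i j ⊗ₜ[K] b l' i) ⊗ₜ[K] ((d l' : H)) := by
      rw [hB]
      simp only [map_sum, assoc_symm_tmul]
      rw [Finset.sum_comm]
      exact Finset.sum_congr rfl fun l' _ => by rw [sum_tmul]
    have h6 : (fun l' => Coalgebra.comul (R := K) (b l' j))
        = (fun l' => ∑ i, b i j ⊗ₜ[K] b l' i) := by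
      apply sum_tmul_basis_cancel d
      rw [← hA, ← hC, h0]
    exact congrFun h6 l
  -- assemble
  refine ⟨⟨Fin r, fun i j => b j i, ?_, ?_⟩, ?_⟩
  · intro i j
    rw [hcomulb j i]
  · intro i j
    rw [hcounit j i]
    simp only [eq_comm]
  · -- coverage
    have hdspan : ∀ j : Fin r, ((d j : H)) ∈
        Submodule.span K (Set.range fun p : Fin r × Fin r => b p.2 p.1) := by
      intro j
      have h1 := Coalgebra.lTensor_counit_comul (R := K) ((d j : H))
      rw [hΔ j, map_sum] at h1
      have h2 := congrArg (TensorProduct.rid K H) h1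
      simp only [map_sum, LinearMap.lTensor_tmul, rid_tmul] at h2
      rw [one_smul] at h2
      rw [← h2]
      exact Submodule.sum_mem _ fun i _ =>
        Submodule.smul_mem _ _ (Submodule.subset_span ⟨(j, i), rfl⟩)
    have hksum : k = ∑ j, d.repr ⟨k, hkD⟩ j • ((d j : H)) := by
      have := coe_basis_sum d ⟨k, hkD⟩
      simpa using this
    rw [hksum]
    exact Submodule.sum_mem _ fun j _ => Submodule.smul_mem _ _ (hdspan j)

namespace Comatrix

variable {K : Type} [Field K] {H : Type} [Ring H] [HopfAlgebra K H]

lemma mul_antipode_sum (E : Comatrix K H) (i j : E.ι) :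
    ∑ l, E.b i l * HopfAlgebra.antipode (R := K) (E.b l j) = if i = j then (1:H) else 0 := by
  have h := HopfAlgebra.mul_antipode_lTensor_comul_apply (R := K) (A := H) (E.b i j)
  rw [E.comul_b] at h
  simp only [map_sum, LinearMap.lTensor_tmul, LinearMap.mul'_apply] at h
  rw [E.counit_b] at h
  rw [h]
  split <;> simp [Algebra.algebraMap_eq_smul_one]

lemma antipode_mul_sum (E : Comatrix K H) (i j : E.ι) :
    ∑ l, HopfAlgebra.antipode (R := K) (E.b i l) * E.b l j = if i = j then (1:H) else 0 := by
  have h := HopfAlgebra.mul_antipode_rTensor_comul_apply (R := K) (A := H) (E.b i j)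
  rw [E.comul_b] at h
  simp only [map_sum, LinearMap.rTensor_tmul, LinearMap.mul'_apply] at h
  rw [E.counit_b] at h
  rw [h]
  split <;> simp [Algebra.algebraMap_eq_smul_one]

noncomputable def mat (E : Comatrix K H) : Matrix E.ι E.ι H := Matrix.of E.b

noncomputable def matS (E : Comatrix K H) : Matrix E.ι E.ι H :=
  Matrix.of fun i j => HopfAlgebra.antipode (R := K) (E.b i j)

lemma mat_mul_matS (E : Comatrix K H) : E.mat * E.matS = 1 := by
  ext i j
  rw [Matrix.mul_apply]
  simpa [mat, matS, Matrix.one_apply] using E.mul_antipode_sum i j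

lemma matS_mul_mat (E : Comatrix K H) : E.matS * E.mat = 1 := by
  ext i j
  rw [Matrix.mul_apply]
  simpa [mat, matS, Matrix.one_apply] using E.antipode_mul_sum i j

lemma map_matrix_mul_one (E : Comatrix K H) (ψ : H →ₐ[K] (H ⊗[K] H))
    (P Q : Matrix E.ι E.ι H) (h : P * Q = 1) : (P.map ψ) * (Q.map ψ) = 1 := by
  have h2 := congrArg (AlgHom.mapMatrix (m := E.ι) ψ) h
  simpa only [map_mul, map_one, AlgHom.mapMatrix_apply] using h2

theorem comul_antipode_b (E : Comatrix K H) (i j : E.ι) :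
    Coalgebra.comul (R := K) (HopfAlgebra.antipode (R := K) (E.b i j))
      = ∑ l, HopfAlgebra.antipode (R := K) (E.b l j) ⊗ₜ[K]
          HopfAlgebra.antipode (R := K) (E.b i l) := by
  classical
  set iL : H →ₐ[K] (H ⊗[K] H) := Algebra.TensorProduct.includeLeft with hiL
  set iR : H →ₐ[K] (H ⊗[K] H) := Algebra.TensorProduct.includeRight with hiR
  set Φ : H →ₐ[K] (H ⊗[K] H) := Bialgebra.comulAlgHom K H with hΦ
  set M1 := E.mat.map iL
  set M2 := E.mat.map iR
  set N1 := E.matS.map iL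
  set N2 := E.matS.map iR
  set X := E.mat.map Φ
  set Z := E.matS.map Φ
  have h11 : M1 * N1 = 1 := E.map_matrix_mul_one iL _ _ E.mat_mul_matS
  have h12 : N1 * M1 = 1 := E.map_matrix_mul_one iL _ _ E.matS_mul_mat
  have h21 : M2 * N2 = 1 := E.map_matrix_mul_one iR _ _ E.mat_mul_matS
  have h22 : N2 * M2 = 1 := E.map_matrix_mul_one iR _ _ E.matS_mul_mat
  have hXZ : X * Z = 1 := E.map_matrix_mul_one Φ _ _ E.mat_mul_matS
  have hX : X = M1 * M2 := by
    ext p q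
    rw [Matrix.mul_apply]
    show Coalgebra.comul (R := K) (E.b p q) = _
    rw [E.comul_b p q]
    refine Finset.sum_congr rfl fun l _ => ?_
    show _ = (E.b p l ⊗ₜ[K] 1) * ((1:H) ⊗ₜ[K] E.b l q)
    rw [Algebra.TensorProduct.tmul_mul_tmul, mul_one, one_mul]
  have hYX : (N2 * N1) * X = 1 := by
    rw [hX, Matrix.mul_assoc, ← Matrix.mul_assoc N1 M1 M2, h12, Matrix.one_mul, h22]
  have hZY : Z = N2 * N1 := (left_inv_eq_right_inv hYX hXZ).symm
  have h6 : Z i j = (N2 * N1) i j := by rw [hZY]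
  rw [Matrix.mul_apply] at h6
  have hZij : Z i j = Coalgebra.comul (R := K) (HopfAlgebra.antipode (R := K) (E.b i j)) := by
    show Φ (HopfAlgebra.antipode (R := K) (E.b i j)) = _
    rw [hΦ, Bialgebra.comulAlgHom_apply]
  rw [hZij] at h6
  rw [h6]
  refine Finset.sum_congr rfl fun l _ => ?_
  show ((1:H) ⊗ₜ[K] (HopfAlgebra.antipode (R := K) (E.b i l))) *
      ((HopfAlgebra.antipode (R := K) (E.b l j)) ⊗ₜ[K] (1:H)) = _
  rw [Algebra.TensorProduct.tmul_mul_tmul, one_mul, mul_one]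

/-- Product of two comatrix families. -/
noncomputable def prod (E G : Comatrix K H) : Comatrix K H where
  ι := E.ι × G.ι
  b := fun p q => E.b p.1 q.1 * G.b p.2 q.2
  comul_b := by
    intro p q
    rw [Bialgebra.comul_mul, E.comul_b, G.comul_b, Finset.sum_mul_sum]
    rw [Fintype.sum_prod_type]
    refine Finset.sum_congr rfl fun u _ => Finset.sum_congr rfl fun v _ => ?_
    rw [Algebra.TensorProduct.tmul_mul_tmul]
  counit_b := by
    intro p q
    rw [Bialgebra.counit_mul, E.counit_b, G.counit_b]
    by_cases h1 : p.1 = q.1 <;> by_cases h2 : p.2 = q.2 <;>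
      simp [h1, h2, Prod.ext_iff]

theorem antipode_entry_mul (E G : Comatrix K H) (i : E.ι) (j : E.ι) (k : G.ι) (l : G.ι) :
    HopfAlgebra.antipode (R := K) (E.b i j * G.b k l)
      = HopfAlgebra.antipode (R := K) (G.b k l) * HopfAlgebra.antipode (R := K) (E.b i j) := by
  classical
  set Fm : Matrix (E.ι × G.ι) (E.ι × G.ι) H := (E.prod G).mat with hFm
  set FS : Matrix (E.ι × G.ι) (E.ι × G.ι) H := (E.prod G).matS with hFS
  set F' : Matrix (E.ι × G.ι) (E.ι × G.ι) H := Matrix.of (fun p q : E.ι × G.ι =>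
    (HopfAlgebra.antipode (R := K) (G.b p.2 q.2)) *
      (HopfAlgebra.antipode (R := K) (E.b p.1 q.1))) with hF'
  have hmat : ∀ p q : E.ι × G.ι, Fm p q = E.b p.1 q.1 * G.b p.2 q.2 := fun p q => rfl
  have h1 : Fm * F' = 1 := by
    ext p q
    rw [Matrix.mul_apply, Fintype.sum_prod_type]
    have key : ∀ u : E.ι,
        ∑ v : G.ι, Fm p (u, v) * F' (u, v) q
          = E.b p.1 u * ((if p.2 = q.2 then (1:H) else 0) *
              HopfAlgebra.antipode (R := K) (E.b u q.1)) := by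
      intro u
      rw [← G.mul_antipode_sum p.2 q.2, Finset.sum_mul, Finset.mul_sum]
      refine Finset.sum_congr rfl fun v _ => ?_
      rw [hmat]
      show (E.b p.1 u * G.b p.2 v) *
          ((HopfAlgebra.antipode (R := K) (G.b v q.2)) *
            (HopfAlgebra.antipode (R := K) (E.b u q.1))) = _
      simp only [mul_assoc]
    simp only [key]
    by_cases h2 : p.2 = q.2
    · simp only [h2, if_true, one_mul]
      rw [E.mul_antipode_sum p.1 q.1, Matrix.one_apply]
      by_cases h3 : p.1 = q.1 <;> simp [h3, Prod.ext_iff, h2]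
    · simp only [h2, if_false, zero_mul, mul_zero, Finset.sum_const_zero, Matrix.one_apply]
      rw [if_neg (by simp [Prod.ext_iff, h2])]
  have h2 : FS * Fm = 1 := (E.prod G).matS_mul_mat
  have h3 : FS = F' := left_inv_eq_right_inv h2 h1
  have h4 : FS (i, k) (j, l) = F' (i, k) (j, l) := by rw [h3]
  exact h4

end Comatrix

theorem hopf_antipode_one : HopfAlgebra.antipode (R := K) (1 : H) = 1 := by
  have h := HopfAlgebra.mul_antipode_rTensor_comul_apply (R := K) (A := H) (1:H)
  rw [Bialgebra.comul_one, Algebra.TensorProduct.one_def] at h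
  simpa using h

theorem hopf_antipode_mul (x y : H) :
    HopfAlgebra.antipode (R := K) (x * y)
      = HopfAlgebra.antipode (R := K) y * HopfAlgebra.antipode (R := K) x := by
  obtain ⟨E, hx⟩ := exists_comatrix (K := K) x
  obtain ⟨G, hy⟩ := exists_comatrix (K := K) y
  have h1 : ∀ (k l : G.ι), HopfAlgebra.antipode (R := K) (x * G.b k l)
      = HopfAlgebra.antipode (R := K) (G.b k l) * HopfAlgebra.antipode (R := K) x := by
    intro k l
    set f : H →ₗ[K] H :=
      ((HopfAlgebra.antipode (R := K) (A := H)) ∘ₗ (LinearMap.mulRight K (G.b k l)))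
        - ((LinearMap.mulLeft K (HopfAlgebra.antipode (R := K) (G.b k l))) ∘ₗ
            (HopfAlgebra.antipode (R := K) (A := H))) with hf
    have hker : Submodule.span K (Set.range fun p : E.ι × E.ι => E.b p.1 p.2)
        ≤ LinearMap.ker f := by
      rw [Submodule.span_le]
      rintro _ ⟨⟨i, j⟩, rfl⟩
      simp only [SetLike.mem_coe, LinearMap.mem_ker, hf, LinearMap.sub_apply,
        LinearMap.comp_apply, LinearMap.mulRight_apply, LinearMap.mulLeft_apply]
      rw [Comatrix.antipode_entry_mul E G, sub_self]
    have h2 := hker hx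
    rw [LinearMap.mem_ker, hf] at h2
    simp only [LinearMap.sub_apply, LinearMap.comp_apply, LinearMap.mulRight_apply,
      LinearMap.mulLeft_apply] at h2
    exact sub_eq_zero.mp h2
  set g : H →ₗ[K] H :=
    ((HopfAlgebra.antipode (R := K) (A := H)) ∘ₗ (LinearMap.mulLeft K x))
      - ((LinearMap.mulRight K (HopfAlgebra.antipode (R := K) x)) ∘ₗ
          (HopfAlgebra.antipode (R := K) (A := H))) with hg
  have hker : Submodule.span K (Set.range fun p : G.ι × G.ι => G.b p.1 p.2)
      ≤ LinearMap.ker g := by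
    rw [Submodule.span_le]
    rintro _ ⟨⟨k, l⟩, rfl⟩
    simp only [SetLike.mem_coe, LinearMap.mem_ker, hg, LinearMap.sub_apply,
      LinearMap.comp_apply, LinearMap.mulRight_apply, LinearMap.mulLeft_apply]
    rw [h1 k l, sub_self]
  have h2 := hker hy
  rw [LinearMap.mem_ker, hg] at h2
  simp only [LinearMap.sub_apply, LinearMap.comp_apply, LinearMap.mulRight_apply,
    LinearMap.mulLeft_apply] at h2
  exact sub_eq_zero.mp h2

end HopfComatrix

section SmashPrep
open Coalgebra

variable {K : Type} [Field K] {H : Type} [Ring H] [HopfAlgebra K H]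
variable {C : LeftHCat K H} (S : SmashCat C) (M : RMod K S.lin)

/-- The right translation operators on the values of a `C#H`-module. -/
noncomputable def tauM (X : C.Obj) (c : H) : M.ob X →ₗ[K] M.ob X :=
  M.map ((C.idm X) ⊗ₜ[K] c)

lemma tau_one (X : C.Obj) : tauM S M X (1 : H) = LinearMap.id :=
  M.map_id X

lemma tau_sum {A : Type*} (X : C.Obj) (s : Finset A) (f : A → H) (v : M.ob X) :
    tauM S M X (∑ a ∈ s, f a) v = ∑ a ∈ s, tauM S M X (f a) v := by
  simp only [tauM, TensorProduct.tmul_sum, map_sum, LinearMap.coe_sum, Finset.sum_apply]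

lemma tau_smul (X : C.Obj) (k : K) (c : H) (v : M.ob X) :
    tauM S M X (k • c) v = k • tauM S M X c v := by
  simp only [tauM, TensorProduct.tmul_smul, map_smul, LinearMap.smul_apply]

lemma tau_zero (X : C.Obj) (v : M.ob X) : tauM S M X (0 : H) v = 0 := by
  simp only [tauM, TensorProduct.tmul_zero, map_zero, LinearMap.zero_apply]

lemma comp_idm_idm (X : C.Obj) (a b : H) :
    S.comp ((C.idm X) ⊗ₜ[K] a) ((C.idm X) ⊗ₜ[K] b) = (C.idm X) ⊗ₜ[K] (b * a) := by
  rw [S.comp_tmul]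
  have h1 : (((C.comp (X := X) (Y := X) (Z := X))).flip (C.idm X)) ∘ₗ
        ((C.act X X).flip (C.idm X))
      = (LinearMap.toSpanSingleton K (C.Hom X X) (C.idm X)) ∘ₗ
          (Coalgebra.counit (R := K) (A := H)) := by
    apply LinearMap.ext; intro c
    simp only [LinearMap.comp_apply, LinearMap.flip_apply, LinearMap.toSpanSingleton_apply]
    rw [C.act_idm, map_smul, LinearMap.smul_apply, C.id_comp]
  rw [h1]
  have h2 : LinearMap.mulRight K a
      = (LinearMap.mulRight K a) ∘ₗ (LinearMap.id (M := H)) := rfl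
  rw [h2, TensorProduct.map_comp, LinearMap.comp_apply]
  have h3 : TensorProduct.map (Coalgebra.counit (R := K) (A := H)) LinearMap.id
      = LinearMap.rTensor H (Coalgebra.counit (R := K) (A := H)) := rfl
  rw [h3, Coalgebra.rTensor_counit_comul, TensorProduct.map_tmul]
  simp only [LinearMap.toSpanSingleton_apply, LinearMap.mulRight_apply, one_smul, one_mul]

lemma tau_mul (X : C.Obj) (a b : H) (v : M.ob X) :
    tauM S M X a (tauM S M X b v) = tauM S M X (b * a) v := by
  have h := M.map_comp ((C.idm X) ⊗ₜ[K] a) ((C.idm X) ⊗ₜ[K] b)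
  rw [show S.lin.comp ((C.idm X) ⊗ₜ[K] a) ((C.idm X) ⊗ₜ[K] b)
      = (C.idm X) ⊗ₜ[K] (b * a) from comp_idm_idm S X a b] at h
  exact (LinearMap.congr_fun h v).symm

lemma comp_idm_tmul {Y X : C.Obj} (u : C.Hom Y X) (c : H) :
    S.comp ((C.idm Y) ⊗ₜ[K] c) (u ⊗ₜ[K] (1:H)) = u ⊗ₜ[K] c := by
  rw [S.comp_tmul]
  rw [show Coalgebra.comul (R := K) (1 : H) = (1 : H ⊗[K] H) from Bialgebra.comul_one]
  rw [Algebra.TensorProduct.one_def, TensorProduct.map_tmul]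
  simp only [LinearMap.comp_apply, LinearMap.flip_apply, C.act_one, LinearMap.id_apply,
    LinearMap.mulRight_apply, one_mul]
  rw [C.id_comp]

lemma map_tmul_factor {Y X : C.Obj} (u : C.Hom Y X) (c : H) (m : M.ob X) :
    M.map (u ⊗ₜ[K] c) m = tauM S M Y c (M.map (u ⊗ₜ[K] (1:H)) m) := by
  have h := M.map_comp ((C.idm Y) ⊗ₜ[K] c) (u ⊗ₜ[K] (1:H))
  rw [show S.lin.comp ((C.idm Y) ⊗ₜ[K] c) (u ⊗ₜ[K] (1:H))
      = u ⊗ₜ[K] c from comp_idm_tmul S u c] at h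
  exact LinearMap.congr_fun h m

lemma actOn_eq_tau (X : C.Obj) (h : H) :
    actOn S M X h = tauM S M X (HopfAlgebra.antipode (R := K) h) := rfl

/-- **Stability lemma**: a finite-dimensional subspace stable under all the
`antipode`-twisted translations is stable under all translations. -/
theorem tau_stab (X : C.Obj) (F : Submodule K (M.ob X)) (hfd : FiniteDimensional K ↥F)
    (hstab : ∀ (a : H), ∀ v ∈ F, tauM S M X (HopfAlgebra.antipode (R := K) a) v ∈ F)
    (c : H) : ∀ v ∈ F, tauM S M X c v ∈ F := by
  classical
  obtain ⟨E, hc⟩ := exists_comatrix (K := K) c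
  suffices hent : ∀ (p q : E.ι), ∀ v ∈ F, tauM S M X (E.b p q) v ∈ F by
    intro v hv
    set ℓ : H →ₗ[K] M.ob X :=
      ((M.map (X := X) (Y := X)) ∘ₗ
        (TensorProduct.mk K (C.Hom X X) H (C.idm X))).flip v with hℓ
    have hspan : Submodule.span K (Set.range fun p : E.ι × E.ι => E.b p.1 p.2)
        ≤ Submodule.comap ℓ F := by
      rw [Submodule.span_le]
      rintro _ ⟨⟨p, q⟩, rfl⟩
      exact hent p q v hv
    exact hspan hc
  intro p q v hv
  -- the invertible system
  have hUW : ∀ (x : E.ι → M.ob X) (l : E.ι),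
      ∑ i, tauM S M X (E.b i l)
        (∑ j, tauM S M X (HopfAlgebra.antipode (R := K) (E.b j i)) (x j)) = x l := by
    intro x l
    have h1 : ∀ i : E.ι, tauM S M X (E.b i l)
          (∑ j, tauM S M X (HopfAlgebra.antipode (R := K) (E.b j i)) (x j))
        = ∑ j, tauM S M X (HopfAlgebra.antipode (R := K) (E.b j i) * E.b i l) (x j) := by
      intro i
      rw [map_sum]
      exact Finset.sum_congr rfl fun j _ => tau_mul S M X _ _ _
    simp only [h1]
    rw [Finset.sum_comm]
    have h2 : ∀ j : E.ι,
        ∑ i, tauM S M X (HopfAlgebra.antipode (R := K) (E.b j i) * E.b i l) (x j)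
          = tauM S M X (if j = l then (1:H) else 0) (x j) := by
      intro j
      rw [← tau_sum, E.antipode_mul_sum j l]
    simp only [h2]
    have h3 : ∀ j : E.ι, tauM S M X (if j = l then (1:H) else 0) (x j)
        = if j = l then x j else 0 := by
      intro j
      split
      · rw [tau_one]; rfl
      · exact tau_zero S M X (x j)
    simp only [h3]
    rw [Finset.sum_ite_eq' Finset.univ l x]
    simp
  set T : (E.ι → ↥F) →ₗ[K] (E.ι → ↥F) := LinearMap.pi (fun i =>
    LinearMap.codRestrict F
      (∑ j, (tauM S M X (HopfAlgebra.antipode (R := K) (E.b j i))) ∘ₗ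
        (F.subtype ∘ₗ (LinearMap.proj j)))
      (fun x => by
        simp only [LinearMap.sum_apply, LinearMap.comp_apply, LinearMap.proj_apply,
          Submodule.coe_subtype]
        exact Submodule.sum_mem _ fun j _ => hstab _ _ (x j).2)) with hT
  have hTapp : ∀ (x : E.ι → ↥F) (i : E.ι),
      ((T x i : ↥F) : M.ob X)
        = ∑ j, tauM S M X (HopfAlgebra.antipode (R := K) (E.b j i)) ((x j : M.ob X)) := by
    intro x i
    simp only [hT, LinearMap.pi_apply, LinearMap.codRestrict_apply, LinearMap.sum_apply,
      LinearMap.comp_apply, LinearMap.proj_apply, Submodule.coe_subtype]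
  have hTinj : Function.Injective T := by
    intro x y hxy
    funext l
    apply Subtype.ext
    have hx := hUW (fun j => ((x j : M.ob X))) l
    have hy := hUW (fun j => ((y j : M.ob X))) l
    rw [← hx, ← hy]
    refine Finset.sum_congr rfl fun i _ => ?_
    rw [← hTapp, ← hTapp, hxy]
  have hTsurj : Function.Surjective T :=
    (LinearMap.injective_iff_surjective (f := T)).mp hTinj
  obtain ⟨y, hy⟩ := hTsurj (Pi.single p ⟨v, hv⟩)
  have hyc : ∀ i : E.ι,
      ∑ j, tauM S M X (HopfAlgebra.antipode (R := K) (E.b j i)) ((y j : M.ob X))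
        = if i = p then v else 0 := by
    intro i
    rw [← hTapp, hy]
    by_cases h : i = p
    · subst h; rw [Pi.single_eq_same]; simp
    · rw [Pi.single_eq_of_ne h, if_neg h]; rfl
  have hfin := hUW (fun j => ((y j : M.ob X))) q
  simp only [hyc] at hfin
  have h4 : ∀ i : E.ι, tauM S M X (E.b i q) (if i = p then v else 0)
      = if i = p then tauM S M X (E.b p q) v else 0 := by
    intro i
    by_cases h : i = p
    · subst h; simp
    · rw [if_neg h, if_neg h]
      exact map_zero _
  rw [Finset.sum_congr rfl (fun i _ => h4 i), Finset.sum_ite_eq' Finset.univ p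
    (fun _ => tauM S M X (E.b p q) v)] at hfin
  simp only [Finset.mem_univ, if_true] at hfin
  rw [hfin]
  exact (y q).2

lemma tmul_antipode_comatrix (E : Comatrix K H) {Y X : C.Obj} (u : C.Hom Y X) (p q : E.ι) :
    u ⊗ₜ[K] (HopfAlgebra.antipode (R := K) (E.b p q))
      = ∑ q', S.lin.comp (((C.act Y X (E.b q' q)) u) ⊗ₜ[K] (1:H))
          ((C.idm X) ⊗ₜ[K] (HopfAlgebra.antipode (R := K) (E.b p q'))) := by
  classical
  set A : H →ₗ[K] C.Hom Y X := (C.act Y X).flip u with hA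
  have hterm : ∀ q', S.lin.comp (((C.act Y X (E.b q' q)) u) ⊗ₜ[K] (1:H))
      ((C.idm X) ⊗ₜ[K] (HopfAlgebra.antipode (R := K) (E.b p q')))
      = ∑ l, (A (HopfAlgebra.antipode (R := K) (E.b l q') * E.b q' q))
          ⊗ₜ[K] (HopfAlgebra.antipode (R := K) (E.b p l)) := by
    intro q'
    show S.comp (((C.act Y X (E.b q' q)) u) ⊗ₜ[K] (1:H))
      ((C.idm X) ⊗ₜ[K] (HopfAlgebra.antipode (R := K) (E.b p q'))) = _
    rw [S.comp_tmul, E.comul_antipode_b p q', map_sum]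
    refine Finset.sum_congr rfl fun l _ => ?_
    rw [TensorProduct.map_tmul]
    congr 1
    · simp only [LinearMap.comp_apply, LinearMap.flip_apply, hA]
      rw [C.comp_id, C.act_mul, LinearMap.comp_apply]
    · simp only [LinearMap.mulRight_apply, mul_one]
  rw [Finset.sum_congr rfl (fun q' (_ : q' ∈ Finset.univ) => hterm q'), Finset.sum_comm]
  have h2 : ∀ l : E.ι, ∑ q', (A (HopfAlgebra.antipode (R := K) (E.b l q') * E.b q' q))
      ⊗ₜ[K] (HopfAlgebra.antipode (R := K) (E.b p l))
      = (A (if l = q then (1:H) else 0)) ⊗ₜ[K]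
          (HopfAlgebra.antipode (R := K) (E.b p l)) := by
    intro l
    rw [← sum_tmul, ← map_sum, E.antipode_mul_sum l q]
  rw [Finset.sum_congr rfl (fun l (_ : l ∈ Finset.univ) => h2 l)]
  have h3 : ∀ l : E.ι, (A (if l = q then (1:H) else 0)) ⊗ₜ[K]
      (HopfAlgebra.antipode (R := K) (E.b p l))
      = if l = q then u ⊗ₜ[K] (HopfAlgebra.antipode (R := K) (E.b p l)) else 0 := by
    intro l
    split
    · congr 1
      rw [hA]
      simp only [LinearMap.flip_apply]
      rw [C.act_one]
      rfl
    · rw [map_zero, zero_tmul]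
  rw [Finset.sum_congr rfl (fun l (_ : l ∈ Finset.univ) => h3 l),
    Finset.sum_ite_eq' Finset.univ q
      (fun l => u ⊗ₜ[K] (HopfAlgebra.antipode (R := K) (E.b p l)))]
  simp

lemma self_mem_orbit (X : C.Obj) (z : M.ob X) :
    z ∈ Submodule.span K (Set.range fun h => actOn S M X h z) := by
  refine Submodule.subset_span ⟨1, ?_⟩
  show actOn S M X 1 z = z
  rw [actOn_eq_tau, hopf_antipode_one, tau_one]
  rfl

lemma orbit_stab (X : C.Obj) (z : M.ob X) (a : H) (w : M.ob X)
    (hw : w ∈ Submodule.span K (Set.range fun h => actOn S M X h z)) :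
    tauM S M X (HopfAlgebra.antipode (R := K) a) w
      ∈ Submodule.span K (Set.range fun h => actOn S M X h z) := by
  have hle : Submodule.span K (Set.range fun h => actOn S M X h z)
      ≤ Submodule.comap (tauM S M X (HopfAlgebra.antipode (R := K) a))
          (Submodule.span K (Set.range fun h => actOn S M X h z)) := by
    rw [Submodule.span_le]
    rintro _ ⟨h, rfl⟩
    simp only [SetLike.mem_coe, Submodule.mem_comap]
    have heq : tauM S M X (HopfAlgebra.antipode (R := K) a) (actOn S M X h z)
        = actOn S M X (a * h) z := by
      rw [actOn_eq_tau, actOn_eq_tau, tau_mul, ← hopf_antipode_mul]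
    rw [heq]
    exact Submodule.subset_span ⟨a * h, rfl⟩
  exact hle hw

theorem theta_vanish (N : RMod K S.lin) (hMlf : M.HLocFin)
    {n : ℕ} {Xs : Fin n → C.Obj} {ms : ∀ i, M.ob (Xs i)}
    (hgen : ∀ (Y : C.Obj) (y : M.ob Y), ∃ f : ∀ i, S.lin.Hom Y (Xs i),
      y = ∑ i, M.map (f i) (ms i))
    (θ : restrictOb S M ⟶ restrictOb S N)
    (hθ : ∀ (i : Fin n) (h : H), θ.app (Xs i) (actOn S M (Xs i) h (ms i)) = 0) :
    θ = 0 := by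
  classical
  apply RModHom.app_injective
  funext Y
  apply LinearMap.ext
  intro y
  show θ.app Y y = 0
  obtain ⟨f, hf⟩ := hgen Y y
  erw [hf, map_sum]
  refine Finset.sum_eq_zero fun i _ => ?_
  have key : ∀ g : C.Hom Y (Xs i) ⊗[K] H, θ.app Y (M.map g (ms i)) = 0 := by
    intro g
    induction g using TensorProduct.induction_on with
    | zero => erw [map_zero, LinearMap.zero_apply, map_zero]
    | add g₁ g₂ h₁ h₂ =>
        erw [map_add, LinearMap.add_apply, map_add, h₁, h₂, add_zero]
    | tmul u c =>
        set z := M.map (u ⊗ₜ[K] (1:H)) (ms i) with hz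
        have hA : ∀ h : H,
            θ.app Y (tauM S M Y (HopfAlgebra.antipode (R := K) h) z) = 0 := by
          intro h
          obtain ⟨E, hh⟩ := exists_comatrix (K := K) h
          have hent : ∀ (u' : C.Hom Y (Xs i)) (p q : E.ι),
              θ.app Y (M.map (u' ⊗ₜ[K]
                (HopfAlgebra.antipode (R := K) (E.b p q))) (ms i)) = 0 := by
            intro u' p q
            erw [tmul_antipode_comatrix S E u' p q, map_sum, LinearMap.sum_apply, map_sum]
            refine Finset.sum_eq_zero fun q' _ => ?_
            rw [M.map_comp, LinearMap.comp_apply]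
            have h0 : θ.app (Xs i)
                (M.map ((C.idm (Xs i)) ⊗ₜ[K]
                  (HopfAlgebra.antipode (R := K) (E.b p q'))) (ms i)) = 0 :=
              hθ i (E.b p q')
            calc θ.app Y (M.map (((C.act Y (Xs i) (E.b q' q)) u') ⊗ₜ[K] (1:H))
                  (M.map ((C.idm (Xs i)) ⊗ₜ[K]
                    (HopfAlgebra.antipode (R := K) (E.b p q'))) (ms i)))
                = (restrictOb S N).map ((C.act Y (Xs i) (E.b q' q)) u')
                    (θ.app (Xs i) (M.map ((C.idm (Xs i)) ⊗ₜ[K]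
                      (HopfAlgebra.antipode (R := K) (E.b p q'))) (ms i))) :=
                  θ.natural _ _
              _ = 0 := by rw [h0, map_zero]
          set ℓ : H →ₗ[K] N.ob Y := (θ.app Y) ∘ₗ
            ((((M.map (X := Y) (Y := Xs i)) ∘ₗ
              ((TensorProduct.mk K (C.Hom Y (Xs i)) H u) ∘ₗ
                (HopfAlgebra.antipode (R := K) (A := H)))).flip) (ms i)) with hℓ
          have hsp : Submodule.span K
              (Set.range fun p : E.ι × E.ι => E.b p.1 p.2) ≤ LinearMap.ker ℓ := by
            rw [Submodule.span_le]
            rintro _ ⟨⟨p, q⟩, rfl⟩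
            simp only [SetLike.mem_coe, LinearMap.mem_ker, hℓ, LinearMap.comp_apply,
              LinearMap.flip_apply, TensorProduct.mk_apply]
            exact hent u p q
          have h5 := hsp hh
          rw [LinearMap.mem_ker, hℓ] at h5
          simp only [LinearMap.comp_apply, LinearMap.flip_apply,
            TensorProduct.mk_apply] at h5
          rw [show tauM S M Y (HopfAlgebra.antipode (R := K) h) z
            = M.map (u ⊗ₜ[K] (HopfAlgebra.antipode (R := K) h)) (ms i) from
              (map_tmul_factor S M u _ (ms i)).symm]
          exact h5
        set Fz := Submodule.span K (Set.range fun h => actOn S M Y h z) with hFz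
        have hfd : FiniteDimensional K ↥Fz := hMlf Y z
        have hstab : ∀ a, ∀ w ∈ Fz,
            tauM S M Y (HopfAlgebra.antipode (R := K) a) w ∈ Fz :=
          fun a w hw => orbit_stab S M Y z a w hw
        have hzF : z ∈ Fz := self_mem_orbit S M Y z
        have hcz : tauM S M Y c z ∈ Fz := tau_stab S M Y Fz hfd hstab c z hzF
        have hkill : Fz ≤ LinearMap.ker (θ.app Y) := by
          erw [hFz, Submodule.span_le]
          rintro _ ⟨h, rfl⟩
          simp only [SetLike.mem_coe, LinearMap.mem_ker]
          exact hA h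
        rw [map_tmul_factor S M u c (ms i)]
        exact hkill hcz
  exact key (f i)

lemma orbit_span_fd (N : RMod K S.lin) (hNlf : N.HLocFin) (X : C.Obj)
    (V : Submodule K (N.ob X)) (hV : FiniteDimensional K ↥V) :
    ∃ U : Submodule K (N.ob X), FiniteDimensional K ↥U ∧
      ∀ (h : H) (v : N.ob X), v ∈ V → actOn S N X h v ∈ U := by
  classical
  set bV := Module.finBasis K ↥V with hbV
  refine ⟨⨆ j : Fin (Module.finrank K ↥V),
    Submodule.span K (Set.range fun h => actOn S N X h ((bV j : N.ob X))), ?_, ?_⟩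
  · haveI : ∀ j : Fin (Module.finrank K ↥V), FiniteDimensional K
        ↥(Submodule.span K (Set.range fun h => actOn S N X h ((bV j : N.ob X)))) :=
      fun j => hNlf X _
    infer_instance
  · intro h v hv
    have hcoe : v = ∑ j, bV.repr ⟨v, hv⟩ j • ((bV j : N.ob X)) := coe_basis_sum bV ⟨v, hv⟩
    rw [hcoe, map_sum]
    refine Submodule.sum_mem _ fun j _ => ?_
    rw [map_smul]
    exact Submodule.smul_mem _ _
      (le_iSup (fun j : Fin (Module.finrank K ↥V) =>
          Submodule.span K (Set.range fun h => actOn S N X h ((bV j : N.ob X)))) j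
        (Submodule.subset_span ⟨h, rfl⟩))

end SmashPrep


section Statement12
variable {K : Type} [Field K] {H : Type} [Ring H] [HopfAlgebra K H]

/-- **Statement 12.** Let `C` be a left `H`-category and let `M`, `N` be `H`-locally
finite right `C#H`-modules with `M` finitely generated.  Then the left `H`-module
`Hom_{Mod-C}(M,N)` (with the adjoint action) is `H`-locally finite, i.e.
`L_{Mod-C}(M,N) = Hom_{Mod-C}(M,N)^{(H)} = Hom_{Mod-C}(M,N)`. -/
theorem statement12 (C : LeftHCat K H) (S : SmashCat C)
    (M N : RMod K S.lin) (hMlf : M.HLocFin) (hNlf : N.HLocFin)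
    (hMfg : RMod.FG M)
    (actE : H →ₗ[K] (restrictOb S M ⟶ restrictOb S N) →ₗ[K]
      (restrictOb S M ⟶ restrictOb S N))
    (h1 : actE 1 = LinearMap.id)
    (h2 : ∀ a b : H, actE (a * b) = (actE a) ∘ₗ (actE b))
    (hformE : ∀ (h : H) (η : restrictOb S M ⟶ restrictOb S N)
      (X : C.Obj) (m : M.ob X), (actE h η).app X m = adjRHS S η h X m) :
    (HLMod.mk (K := K) (H := H)
      (V := (restrictOb S M ⟶ restrictOb S N)) actE h1 h2).IsLocFin := by
  classical
  intro η
  show FiniteDimensional K (Submodule.span K (Set.range fun h => actE h η))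
  obtain ⟨n, Xs, ms, hgen⟩ := hMfg
  set Ws : ∀ i : Fin n, Submodule K (M.ob (Xs i)) := fun i =>
    Submodule.span K (Set.range fun h => actOn S M (Xs i) h (ms i)) with hWs
  haveI hWfd : ∀ i, FiniteDimensional K ↥(Ws i) := fun i => hMlf (Xs i) (ms i)
  have hWstab : ∀ (i : Fin n) (a : H), ∀ w ∈ Ws i, actOn S M (Xs i) a w ∈ Ws i :=
    fun i a w hw => orbit_stab S M (Xs i) (ms i) a w hw
  haveI hV : ∀ i, FiniteDimensional K ↥(Submodule.map (η.app (Xs i)) (Ws i)) :=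
    fun i => Module.Finite.map (Ws i) (η.app (Xs i))
  choose Us hUfd hUmem using fun i : Fin n =>
    orbit_span_fd S N hNlf (Xs i) (Submodule.map (η.app (Xs i)) (Ws i)) (hV i)
  have hadj : ∀ (h : H) (i : Fin n), ∀ w ∈ Ws i, (actE h η).app (Xs i) w ∈ Us i := by
    intro h i w hw
    rw [hformE h η (Xs i) w]
    have hgen2 : ∀ t : H ⊗[K] H, TensorProduct.lift
        (((LinearMap.llcomp (σ₁₂ := RingHom.id K) (σ₂₃ := RingHom.id K) (σ₁₃ := RingHom.id K)
          K H (N.ob (Xs i)) (N.ob (Xs i))).flip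
            ((η.app (Xs i)) ∘ₗ (((actOn S M (Xs i)) ∘ₗ
              (HopfAlgebra.antipode (R := K) (A := H))).flip w)))
          ∘ₗ (actOn S N (Xs i))) t ∈ Us i := by
      intro t
      induction t using TensorProduct.induction_on with
      | zero => rw [map_zero]; exact Submodule.zero_mem _
      | tmul a b =>
          rw [TensorProduct.lift.tmul]
          simp only [LinearMap.comp_apply, LinearMap.flip_apply, LinearMap.llcomp_apply]
          exact hUmem i a _ (Submodule.mem_map_of_mem
            (hWstab i (HopfAlgebra.antipode (R := K) b) w hw))
      | add t1 t2 ht1 ht2 => rw [map_add]; exact Submodule.add_mem _ ht1 ht2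
    exact hgen2 (Coalgebra.comul (R := K) h)
  set Φ : (restrictOb S M ⟶ restrictOb S N) →ₗ[K]
      (∀ i : Fin n, (↥(Ws i) →ₗ[K] N.ob (Xs i))) :=
    { toFun := fun θ => fun i => (θ.app (Xs i)) ∘ₗ (Ws i).subtype
      map_add' := fun θ ν => by
        funext i; apply LinearMap.ext; intro w; rfl
      map_smul' := fun k θ => by
        funext i; apply LinearMap.ext; intro w; rfl } with hΦ
  have hΦinj : Function.Injective Φ := by
    intro θ1 θ2 h12
    have h0 : Φ (θ1 - θ2) = 0 := by rw [map_sub, h12, sub_self]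
    have hvan : (θ1 - θ2) = 0 := by
      refine theta_vanish S M N hMlf hgen (θ1 - θ2) ?_
      intro i h
      have hc1 : ((θ1 - θ2).app (Xs i)) ∘ₗ (Ws i).subtype = 0 := congrFun h0 i
      have hc2 := LinearMap.congr_fun hc1 ⟨actOn S M (Xs i) h (ms i),
        Submodule.subset_span ⟨h, rfl⟩⟩
      exact hc2
    exact sub_eq_zero.mp hvan
  set Ψ : H →ₗ[K] (restrictOb S M ⟶ restrictOb S N) := actE.flip η with hΨ
  have hspanr : Submodule.span K (Set.range fun h => actE h η) = LinearMap.range Ψ := by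
    have hr : (Set.range fun h => actE h η) = ↑(LinearMap.range Ψ) := by
      ext x
      constructor
      · rintro ⟨h, rfl⟩; exact ⟨h, rfl⟩
      · rintro ⟨h, rfl⟩; exact ⟨h, rfl⟩
    rw [hr, Submodule.span_eq]
  rw [hspanr]
  set emb : (∀ i : Fin n, (↥(Ws i) →ₗ[K] ↥(Us i))) →ₗ[K]
      (∀ i : Fin n, (↥(Ws i) →ₗ[K] N.ob (Xs i))) :=
    LinearMap.pi (fun i =>
      (LinearMap.llcomp K ↥(Ws i) ↥(Us i) (N.ob (Xs i)) ((Us i).subtype)) ∘ₗ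
        (LinearMap.proj i)) with hemb
  have hle : LinearMap.range (Φ ∘ₗ Ψ) ≤ LinearMap.range emb := by
    rintro _ ⟨h, rfl⟩
    refine ⟨fun i => LinearMap.codRestrict (Us i)
      (((actE h η).app (Xs i)) ∘ₗ (Ws i).subtype)
      (fun w => hadj h i _ w.2), ?_⟩
    funext i
    apply LinearMap.ext; intro w
    rfl
  haveI hfdemb : FiniteDimensional K ↥(LinearMap.range emb) := by infer_instance
  have hfd1 : FiniteDimensional K ↥(LinearMap.range (Φ ∘ₗ Ψ)) :=
    Submodule.finiteDimensional_of_le hle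
  have hmap : Submodule.map Φ (LinearMap.range Ψ) = LinearMap.range (Φ ∘ₗ Ψ) :=
    (LinearMap.range_comp Ψ Φ).symm
  haveI hfd2 : FiniteDimensional K ↥(Submodule.map Φ (LinearMap.range Ψ)) := by
    rw [hmap]; exact hfd1
  exact Module.Finite.equiv (Submodule.equivMapOfInjective Φ hΦinj (LinearMap.range Ψ)).symm

end Statement12

end
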